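/- arXiv:1008.5371 — 12 statements merged into one kernel-verified Lean document; each statement's English description precedes it below -/
import Mathlib

section
/- If a topological space X is the union of n-many open-hereditarily irresolvable subspaces, then X is not (n+1)-resolvable. -/
open Set TopologicalSpace

variable {X : Type*}

/-- The family `D : ι → Set X` witnesses `ι`-resolvability of the subspace `S` of `(X, T)`:
the `D i` are pairwise disjoint nonempty subsets of `S`, each dense in the subspace `S`
(equivalently `S ⊆ closure (D i)`). -/
def ResolvableFam (T : TopologicalSpace X) (S : Set X) (ι : Type*) : Prop :=
  ∃ D : ι → Set X, (∀ i, D i ⊆ S) ∧ (∀ i, (D i).Nonempty) ∧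
    (∀ i, S ⊆ @closure X T (D i)) ∧ (Pairwise fun i j => Disjoint (D i) (D j))

/-- A topology is quasi-regular if every nonempty open set contains the closure
of some nonempty open set. -/
def QuasiRegular (T : TopologicalSpace X) : Prop :=
  ∀ U : Set X, T.IsOpen U → U.Nonempty →
    ∃ V : Set X, T.IsOpen V ∧ V.Nonempty ∧ @closure X T V ⊆ U

/-- If a nonempty open set is covered by finitely many closed sets, one of them contains
a nonempty open subset of it. -/
lemma aux_union {ι : Type*} [TopologicalSpace X] (C : ι → Set X) (s : Finset ι) :
    ∀ (U : Set X), IsOpen U → U.Nonempty → (∀ i ∈ s, IsClosed (C i)) →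
      U ⊆ ⋃ i ∈ s, C i → ∃ i ∈ s, ∃ V : Set X, IsOpen V ∧ V.Nonempty ∧ V ⊆ U ∩ C i := by
  classical
  induction s using Finset.induction_on with
  | empty => intro U _ hUne _ hsub
             obtain ⟨x, hx⟩ := hUne
             simpa using hsub hx
  | @insert a s ha ih =>
      intro U hU hUne hCl hsub
      by_cases h : (U \ C a).Nonempty
      · have hsub' : U \ C a ⊆ ⋃ i ∈ s, C i := by
          intro x hx
          have := hsub hx.1
          simp only [Finset.mem_insert, mem_iUnion, exists_prop] at this ⊢
          rcases this with ⟨i, hi | hi, hxi⟩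
          · exact absurd hxi (by simpa [hi] using hx.2)
          · exact ⟨i, hi, hxi⟩
        obtain ⟨i, his, V, hV, hVne, hVsub⟩ :=
          ih (U \ C a) (hU.sdiff (hCl a (Finset.mem_insert_self a s)))
            h (fun i hi => hCl i (Finset.mem_insert_of_mem hi)) hsub'
        exact ⟨i, Finset.mem_insert_of_mem his, V, hV, hVne,
          hVsub.trans (inter_subset_inter_left _ diff_subset)⟩
      · refine ⟨a, Finset.mem_insert_self a s, U, hU, hUne, fun x hx => ⟨hx, ?_⟩⟩
        by_contra hxc
        exact h ⟨x, hx, hxc⟩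

theorem stmt0 [T : TopologicalSpace X] (n : ℕ) (hn : 0 < n) (S : Fin n → Set X)
    (hcover : (⋃ i, S i) = univ)
    (hOHI : ∀ i, ∀ A : Set X, (∃ U, T.IsOpen U ∧ A = U ∩ S i) → A.Nonempty →
      ¬ ResolvableFam T A (Fin 2)) :
    ¬ ResolvableFam T (univ : Set X) (Fin (n + 1)) := by
  classical
  rintro ⟨D, _hDsub, hDne, hDcl, hDdisj⟩
  set C : Fin n → Fin (n + 1) → Set X := fun i j => closure (D j ∩ S i) with hCdef
  have hcov : ∀ j, (univ : Set X) ⊆ ⋃ i, C i j := by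
    intro j x _
    have hx : x ∈ closure (D j) := hDcl j trivial
    have hD : D j = ⋃ i, D j ∩ S i := by
      rw [← inter_iUnion, hcover, inter_univ]
    rw [hD, closure_iUnion_of_finite] at hx
    exact hx
  -- build a decreasing chain: one nonempty open set inside C (f j) j for all j in s
  have key : ∀ s : Finset (Fin (n + 1)), ∃ W : Set X, IsOpen W ∧ W.Nonempty ∧
      ∃ f : Fin (n + 1) → Fin n, ∀ j ∈ s, W ⊆ C (f j) j := by
    intro s
    induction s using Finset.induction_on with
    | empty =>
        refine ⟨univ, isOpen_univ, ?_, fun _ => ⟨0, hn⟩, by simp⟩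
        obtain ⟨x, _⟩ := hDne 0
        exact ⟨x, trivial⟩
    | @insert a s ha ih =>
        obtain ⟨W, hW, hWne, f, hf⟩ := ih
        obtain ⟨i, _, V, hV, hVne, hVsub⟩ :=
          aux_union (C := fun i => C i a) Finset.univ W hW hWne
            (fun i _ => isClosed_closure)
            (fun x hx => by simpa using hcov a (mem_univ x))
        refine ⟨V, hV, hVne, Function.update f a i, fun j hj => ?_⟩
        rcases Finset.mem_insert.mp hj with rfl | hj
        · simpa [Function.update_self] using hVsub.trans inter_subset_right
        · have hja : j ≠ a := fun h => ha (h ▸ hj)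
          rw [Function.update_of_ne hja]
          exact (hVsub.trans inter_subset_left).trans (hf j hj)
  obtain ⟨W, hW, hWne, f, hf⟩ := key Finset.univ
  obtain ⟨j, k, hjk, hfjk⟩ := Fintype.exists_ne_map_eq_of_card_lt f (by simp)
  set i := f j with hi
  have hWj : W ⊆ closure (D j ∩ S i) := hf j (Finset.mem_univ j)
  have hWk : W ⊆ closure (D k ∩ S i) := by
    have := hf k (Finset.mem_univ k); rwa [← hfjk] at this
  -- W meets D j ∩ S i and D k ∩ S i
  have hmeet : ∀ m : Fin (n + 1), W ⊆ closure (D m ∩ S i) → (D m ∩ S i ∩ W).Nonempty := by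
    intro m hm
    obtain ⟨x, hx⟩ := hWne
    have hxcl := hm hx
    rcases (mem_closure_iff.mp hxcl) W hW hx with ⟨y, hyW, hyD⟩
    exact ⟨y, hyD, hyW⟩
  set A : Set X := W ∩ S i with hA
  have hAne : A.Nonempty := by
    obtain ⟨y, hyD, hyW⟩ := hmeet j hWj
    exact ⟨y, hyW, hyD.2⟩
  refine hOHI i A ⟨W, hW, rfl⟩ hAne ?_
  refine ⟨fun m => if m = 0 then D j ∩ A else D k ∩ A, by intro m; dsimp only; split <;> exact inter_subset_right, ?_, ?_, ?_⟩
  · intro m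
    by_cases hm : m = 0 <;> simp only [hm, if_true, if_false, hA]
    · obtain ⟨y, hyD, hyW⟩ := hmeet j hWj
      exact ⟨y, hyD.1, hyW, hyD.2⟩
    · obtain ⟨y, hyD, hyW⟩ := hmeet k hWk
      exact ⟨y, hyD.1, hyW, hyD.2⟩
  · intro m x hx
    have hloc : ∀ p : Fin (n + 1), W ⊆ closure (D p ∩ S i) → x ∈ closure (D p ∩ A) := by
      intro p hp
      rw [mem_closure_iff]
      intro O hO hxO
      have hxcl : x ∈ closure (D p ∩ S i) := hp hx.1
      rcases mem_closure_iff.mp hxcl (O ∩ W) (hO.inter hW) ⟨hxO, hx.1⟩ with ⟨y, hyOW, hyD⟩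
      exact ⟨y, hyOW.1, hyD.1, hyOW.2, hyD.2⟩
    by_cases hm : m = 0 <;> simp only [hm, if_true, if_false]
    · exact hloc j hWj
    · exact hloc k hWk
  · have hd : Disjoint (D j ∩ A) (D k ∩ A) :=
      (hDdisj hjk).mono inter_subset_left inter_subset_left
    intro a b hab
    fin_cases a <;> fin_cases b <;> simp_all <;> exact hd.symm
end

section
/- A topological space which is n-resolvable for every natural number n is ω-resolvable. -/
open Set TopologicalSpace

variable {X : Type*}

/-!
Say that `A` is `k`-fold dense on an open set `V` if `A` contains `k` pairwise disjoint subsets,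
each dense in `V`. This property glues along a maximal disjoint family of open sets, so it holds
on `U` as soon as it holds on some nonempty open subset of every nonempty open `W ⊆ U`.

The heart of the proof is a splitting step: if `A` is `k`-fold dense on `U` for every `k`, then
`A` contains disjoint `B` and `C` with `B` dense in `U` and `C` again `k`-fold dense on `U` for
every `k`; iterating it splits off infinitely many disjoint dense sets. By gluing, it suffices to
split on some nonempty open subset of every nonempty open set `U`. Take a dense `D ⊆ A` with
`A \ D` still dense. If neither `A \ D` nor `D` is `k`-fold dense for every `k` on some nonempty
open subset of `U`, there is a nonempty open `W ⊆ U` on which `A \ D` is nowhere `K`-fold and `D`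
nowhere `M`-fold dense. But `A` is `(M + K)`-fold dense on `W`, and on a smaller open set each of
these `M + K` pieces has its part in `D` or its part outside `D` dense, so one of the two fails.
-/

open Function

theorem disjoint_biUnion_of_pairwiseDisjoint {𝒞 : Set (Set X)} (h𝒞 : 𝒞.PairwiseDisjoint id)
    {F G : Set X → Set X} (hF : ∀ V ∈ 𝒞, F V ⊆ V) (hG : ∀ V ∈ 𝒞, G V ⊆ V)
    (hFG : ∀ V ∈ 𝒞, Disjoint (F V) (G V)) :
    Disjoint (⋃ V ∈ 𝒞, F V) (⋃ V ∈ 𝒞, G V) := by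
  refine disjoint_iUnion₂_left.2 fun V hV => disjoint_iUnion₂_right.2 fun V' hV' => ?_
  rcases eq_or_ne V V' with rfl | hne
  · exact hFG V hV
  · exact (h𝒞 hV hV' hne).mono (hF V hV) (hG V' hV')

section Resolvability

variable [TopologicalSpace X]

theorem subset_closure_biUnion {𝒞 : Set (Set X)} {U : Set X} (hU : U ⊆ closure (⋃₀ 𝒞))
    {F : Set X → Set X} (hF : ∀ V ∈ 𝒞, V ⊆ closure (F V)) :
    U ⊆ closure (⋃ V ∈ 𝒞, F V) :=
  hU.trans <| closure_minimal
    (sUnion_subset fun V hV => (hF V hV).trans (closure_mono (subset_biUnion_of_mem hV)))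
    isClosed_closure

theorem exists_pairwiseDisjoint_subset_closure_sUnion {U : Set X} (hU : IsOpen U)
    (P : Set X → Prop)
    (hP : ∀ W, IsOpen W → W ⊆ U → W.Nonempty → ∃ V ⊆ W, IsOpen V ∧ V.Nonempty ∧ P V) :
    ∃ 𝒞 : Set (Set X), (∀ V ∈ 𝒞, IsOpen V ∧ P V) ∧ 𝒞.PairwiseDisjoint id ∧
      U ⊆ closure (⋃₀ 𝒞) := by
  let 𝒮 : Set (Set (Set X)) :=
    {𝒞 | (∀ V ∈ 𝒞, IsOpen V ∧ V.Nonempty ∧ P V) ∧ 𝒞.PairwiseDisjoint id}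
  have hchain : ∀ c ⊆ 𝒮, IsChain (· ⊆ ·) c → ∃ ub ∈ 𝒮, ∀ s ∈ c, s ⊆ ub := by
    intro c hc hchain
    refine ⟨⋃₀ c, ⟨?_, ?_⟩, fun s hs => subset_sUnion_of_mem hs⟩
    · rintro V ⟨𝒞, h𝒞, hV⟩
      exact (hc h𝒞).1 V hV
    · exact (pairwiseDisjoint_sUnion hchain.directedOn).2 fun 𝒞 h𝒞 => (hc h𝒞).2
  obtain ⟨𝒞, hmax⟩ := zorn_subset 𝒮 hchain
  obtain ⟨hmem, hdisj⟩ := hmax.prop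
  refine ⟨𝒞, fun V hV => ⟨(hmem V hV).1, (hmem V hV).2.2⟩, hdisj, fun x hxU => ?_⟩
  by_contra hx
  obtain ⟨V, hVW, hVo, ⟨y, hyV⟩, hPV⟩ :=
    hP (U \ closure (⋃₀ 𝒞)) (hU.sdiff isClosed_closure) sdiff_subset ⟨x, hxU, hx⟩
  have hV𝒞 : Disjoint V (⋃₀ 𝒞) :=
    disjoint_left.2 fun z hz hz' => (hVW hz).2 (subset_closure hz')
  have hins : insert V 𝒞 ∈ 𝒮 := by
    refine ⟨?_, hdisj.insert fun V' hV' _ => (hV𝒞.mono_right (subset_sUnion_of_mem hV'))⟩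
    rintro V' (rfl | hV')
    exacts [⟨hVo, ⟨y, hyV⟩, hPV⟩, hmem V' hV']
  have hV : V ∈ 𝒞 := (hmax.eq_of_subset hins (subset_insert V 𝒞)) ▸ mem_insert V 𝒞
  exact disjoint_left.1 hV𝒞 hyV (subset_sUnion_of_mem hV hyV)

def FoldDenseOn (k : ℕ) (A V : Set X) : Prop :=
  ∃ C : Fin k → Set X, (∀ i, C i ⊆ A) ∧ (∀ i, V ⊆ closure (C i)) ∧ Pairwise (Disjoint on C)

variable {k : ℕ} {A V U : Set X}

theorem FoldDenseOn.mono {A' V' : Set X} (h : FoldDenseOn k A V) (hA : A ⊆ A') (hV : V' ⊆ V) :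
    FoldDenseOn k A' V' :=
  let ⟨C, hCA, hCV, hC⟩ := h
  ⟨C, fun i => (hCA i).trans hA, fun i => hV.trans (hCV i), hC⟩

theorem FoldDenseOn.inter_of_isOpen (h : FoldDenseOn k A V) (hV : IsOpen V) :
    FoldDenseOn k (V ∩ A) V :=
  let ⟨C, hCA, hCV, hC⟩ := h
  ⟨fun i => V ∩ C i, fun i => inter_subset_inter_right V (hCA i),
    fun i => (subset_inter subset_rfl (hCV i)).trans hV.inter_closure,
    fun _ _ hij => (hC hij).mono inter_subset_right inter_subset_right⟩

theorem FoldDenseOn.biUnion {𝒞 : Set (Set X)} (h𝒞 : 𝒞.PairwiseDisjoint id)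
    (hopen : ∀ V ∈ 𝒞, IsOpen V) (hU : U ⊆ closure (⋃₀ 𝒞)) {F : Set X → Set X}
    (hF : ∀ V ∈ 𝒞, FoldDenseOn k (F V) V) :
    FoldDenseOn k (⋃ V ∈ 𝒞, F V) U := by
  choose! C hCF hCV hC using fun V hV => (hF V hV).inter_of_isOpen (hopen V hV)
  refine ⟨fun i => ⋃ V ∈ 𝒞, C V i, fun i => iUnion₂_mono fun V hV => (hCF V hV i).trans
    inter_subset_right, fun i => subset_closure_biUnion hU fun V hV => hCV V hV i,
    fun i j hij => ?_⟩
  exact disjoint_biUnion_of_pairwiseDisjoint h𝒞 (fun V hV => (hCF V hV i).trans inter_subset_left)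
    (fun V hV => (hCF V hV j).trans inter_subset_left) fun V hV => hC V hV hij

theorem foldDenseOn_of_forall_exists (hU : IsOpen U)
    (h : ∀ W, IsOpen W → W ⊆ U → W.Nonempty → ∃ V ⊆ W, IsOpen V ∧ V.Nonempty ∧ FoldDenseOn k A V) :
    FoldDenseOn k A U := by
  obtain ⟨𝒞, h𝒞, hdisj, hU𝒞⟩ := exists_pairwiseDisjoint_subset_closure_sUnion hU _ h
  exact (FoldDenseOn.biUnion hdisj (fun V hV => (h𝒞 V hV).1) hU𝒞 fun V hV => (h𝒞 V hV).2).mono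
    (iUnion₂_subset fun _ _ => subset_rfl) subset_rfl

theorem foldDenseOn_of_finset {ι : Type*} (C : ι → Set X) (hC : Pairwise (Disjoint on C))
    (t : Finset ι) (hk : k ≤ t.card) (hCA : ∀ i ∈ t, C i ⊆ A) (hCV : ∀ i ∈ t, V ⊆ closure (C i)) :
    FoldDenseOn k A V := by
  let e : Fin k → t := fun j => t.equivFin.symm (Fin.castLE hk j)
  have he : Injective e := t.equivFin.symm.injective.comp (Fin.castLE_injective hk)
  exact ⟨fun j => C (e j), fun j => hCA _ (e j).2, fun j => hCV _ (e j).2,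
    hC.comp_of_injective (Subtype.val_injective.comp he)⟩

theorem exists_open_subset_closure_or {P Q : Set X} (hV : IsOpen V) (hne : V.Nonempty)
    (h : V ⊆ closure P ∪ closure Q) :
    ∃ W ⊆ V, IsOpen W ∧ W.Nonempty ∧ (W ⊆ closure P ∨ W ⊆ closure Q) := by
  by_cases hP : V ⊆ closure P
  · exact ⟨V, subset_rfl, hV, hne, Or.inl hP⟩
  · obtain ⟨x, hxV, hxP⟩ := not_subset.1 hP
    exact ⟨V \ closure P, sdiff_subset, hV.sdiff isClosed_closure, ⟨x, hxV, hxP⟩,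
      Or.inr fun y hy => (h hy.1).resolve_left hy.2⟩

theorem exists_open_forall_subset_closure_or {ι : Type*} (s : Finset ι) {P Q : ι → Set X}
    (hV : IsOpen V) (hne : V.Nonempty) (h : ∀ i ∈ s, V ⊆ closure (P i) ∪ closure (Q i)) :
    ∃ W ⊆ V, IsOpen W ∧ W.Nonempty ∧ ∀ i ∈ s, W ⊆ closure (P i) ∨ W ⊆ closure (Q i) := by
  classical
  induction s using Finset.induction_on generalizing V with
  | empty => exact ⟨V, subset_rfl, hV, hne, fun i hi => absurd hi (Finset.notMem_empty i)⟩
  | insert a s _ ih =>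
    obtain ⟨W, hWV, hWo, hWne, hW⟩ :=
      ih hV hne fun i hi => h i (Finset.mem_insert_of_mem hi)
    obtain ⟨W', hW'W, hW'o, hW'ne, hW'⟩ :=
      exists_open_subset_closure_or hWo hWne (hWV.trans (h a (Finset.mem_insert_self a s)))
    refine ⟨W', hW'W.trans hWV, hW'o, hW'ne, fun i hi => ?_⟩
    rcases Finset.mem_insert.1 hi with rfl | hi
    · exact hW'
    · exact (hW i hi).imp hW'W.trans hW'W.trans

theorem FoldDenseOn.exists_inter_or_diff {m : ℕ} (h : FoldDenseOn (m + k) A V) (hV : IsOpen V)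
    (hne : V.Nonempty) (B : Set X) :
    ∃ W ⊆ V, IsOpen W ∧ W.Nonempty ∧ (FoldDenseOn m (A ∩ B) W ∨ FoldDenseOn k (A \ B) W) := by
  classical
  obtain ⟨C, hCA, hCV, hC⟩ := h
  obtain ⟨W, hWV, hWo, hWne, hW⟩ := exists_open_forall_subset_closure_or Finset.univ hV hne
    (P := fun i => C i ∩ B) (Q := fun i => C i \ B) fun i _ => by
      rw [← closure_union, inter_union_sdiff]; exact hCV i
  refine ⟨W, hWV, hWo, hWne, ?_⟩
  let t := Finset.univ.filter fun i => W ⊆ closure (C i ∩ B)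
  by_cases ht : m ≤ t.card
  · refine .inl <| foldDenseOn_of_finset _ (fun i j hij => (hC hij).mono inter_subset_left
      inter_subset_left) t ht (fun i _ => inter_subset_inter_left B (hCA i)) fun i hi => ?_
    exact (Finset.mem_filter.1 hi).2
  · have hcard : k ≤ tᶜ.card := by
      rw [Finset.card_compl, Fintype.card_fin]; omega
    refine .inr <| foldDenseOn_of_finset _ (fun i j hij => (hC hij).mono sdiff_subset
      sdiff_subset) tᶜ hcard (fun i _ => sdiff_subset_sdiff_left (hCA i)) fun i hi => ?_
    exact (hW i (Finset.mem_univ i)).resolve_left (by simpa [t] using hi)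

theorem forall_foldDenseOn_or_exists_nowhere (S : Set X) (hU : IsOpen U) :
    (∀ k, FoldDenseOn k S U) ∨ ∃ k, ∃ W ⊆ U, IsOpen W ∧ W.Nonempty ∧
      ∀ V ⊆ W, IsOpen V → V.Nonempty → ¬ FoldDenseOn k S V := by
  refine or_iff_not_imp_right.2 fun h k => foldDenseOn_of_forall_exists hU fun W hWo hWU hWne => ?_
  push Not at h
  exact h k W hWU hWo hWne

theorem exists_open_split (hU : IsOpen U) (hne : U.Nonempty) (hA : ∀ k, FoldDenseOn k A U) :
    ∃ V ⊆ U, IsOpen V ∧ V.Nonempty ∧ ∃ B C, B ⊆ A ∧ C ⊆ A ∧ Disjoint B C ∧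
      V ⊆ closure B ∧ ∀ k, FoldDenseOn k C V := by
  obtain ⟨D, hDA, hDU, hD⟩ := hA 2
  have hD₁ : D 1 ⊆ A \ D 0 := subset_sdiff.2 ⟨hDA 1, (hD (by decide)).symm⟩
  rcases forall_foldDenseOn_or_exists_nowhere (A \ D 0) hU with
    hdiff | ⟨K, U', hU'U, hU'o, hU'ne, hK⟩
  · exact ⟨U, subset_rfl, hU, hne, D 0, A \ D 0, hDA 0, sdiff_subset, disjoint_sdiff_right,
      hDU 0, hdiff⟩
  rcases forall_foldDenseOn_or_exists_nowhere (D 0) hU'o with hD₀ | ⟨M, W, hWU', hWo, hWne, hM⟩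
  · exact ⟨U', hU'U, hU'o, hU'ne, A \ D 0, D 0, sdiff_subset, hDA 0, disjoint_sdiff_left,
      (hU'U.trans (hDU 1)).trans (closure_mono hD₁), hD₀⟩
  obtain ⟨W', hW'W, hW'o, hW'ne, hW'⟩ :=
    ((hA (M + K)).mono subset_rfl (hWU'.trans hU'U)).exists_inter_or_diff hWo hWne (D 0)
  rcases hW' with hinter | hdiff
  · exact absurd (hinter.mono inter_subset_right subset_rfl) (hM W' hW'W hW'o hW'ne)
  · exact absurd hdiff (hK W' (hW'W.trans hWU') hW'o hW'ne)

theorem exists_split (hU : IsOpen U) (hA : ∀ k, FoldDenseOn k A U) :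
    ∃ B C, B ⊆ A ∧ C ⊆ A ∧ Disjoint B C ∧ U ⊆ closure B ∧ ∀ k, FoldDenseOn k C U := by
  obtain ⟨𝒞, h𝒞, hdisj, hU𝒞⟩ := exists_pairwiseDisjoint_subset_closure_sUnion hU _
    fun W hWo hWU hWne => exists_open_split hWo hWne fun k => (hA k).mono subset_rfl hWU
  choose! B C hBA hCA hBC hB hC using fun V hV => (h𝒞 V hV).2
  have hopen V (hV : V ∈ 𝒞) : IsOpen V := (h𝒞 V hV).1
  refine ⟨⋃ V ∈ 𝒞, V ∩ B V, ⋃ V ∈ 𝒞, V ∩ C V,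
    iUnion₂_subset fun V hV => inter_subset_right.trans (hBA V hV),
    iUnion₂_subset fun V hV => inter_subset_right.trans (hCA V hV),
    disjoint_biUnion_of_pairwiseDisjoint hdisj (fun _ _ => inter_subset_left)
      (fun _ _ => inter_subset_left) fun V hV => (hBC V hV).mono inter_subset_right
      inter_subset_right,
    subset_closure_biUnion hU𝒞 fun V hV =>
      (subset_inter subset_rfl (hB V hV)).trans (hopen V hV).inter_closure,
    fun k => FoldDenseOn.biUnion hdisj hopen hU𝒞 fun V hV =>
      (hC V hV k).inter_of_isOpen (hopen V hV)⟩

theorem exists_seq_pairwise_disjoint_dense (hU : IsOpen U) (hA : ∀ k, FoldDenseOn k A U) :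
    ∃ E : ℕ → Set X, (∀ n, E n ⊆ A) ∧ (∀ n, U ⊆ closure (E n)) ∧ Pairwise (Disjoint on E) := by
  choose! B C hBA hCA hBC hB hC using fun A' (hA' : ∀ k, FoldDenseOn k A' U) => exists_split hU hA'
  let G : ℕ → Set X := fun n => C^[n] A
  have hG : ∀ n k, FoldDenseOn k (G n) U := by
    intro n
    induction n with
    | zero => exact hA
    | succ n ih => simpa only [G, Function.iterate_succ_apply'] using hC (G n) ih
  have hGsucc n : G (n + 1) = C (G n) := Function.iterate_succ_apply' C n A
  have hanti : Antitone G := antitone_nat_of_succ_le fun n => hGsucc n ▸ hCA _ (hG n)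
  refine ⟨fun n => B (G n), fun n => (hBA _ (hG n)).trans (hanti n.zero_le),
    fun n => hB _ (hG n), (pairwise_disjoint_on _).2 fun n m hnm => ?_⟩
  have hm : B (G m) ⊆ C (G n) := hGsucc n ▸ (hBA _ (hG m)).trans (hanti hnm)
  exact (hBC _ (hG n)).mono_right hm

end Resolvability

theorem stmt1 [T : TopologicalSpace X]
    (h : ∀ n : ℕ, ResolvableFam T (univ : Set X) (Fin n)) :
    ResolvableFam T (univ : Set X) ℕ := by
  obtain ⟨D, -, hD, -, -⟩ := h 1
  obtain ⟨x, -⟩ := hD 0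
  have hfold : ∀ k, FoldDenseOn k (univ : Set X) univ := fun k =>
    let ⟨D, hDsub, _, hDcl, hDdisj⟩ := h k
    ⟨D, hDsub, hDcl, hDdisj⟩
  obtain ⟨E, hEsub, hEcl, hEdisj⟩ := exists_seq_pairwise_disjoint_dense isOpen_univ hfold
  exact ⟨E, hEsub, fun n => closure_nonempty_iff.1 ⟨x, hEcl n (mem_univ x)⟩, hEcl, hEdisj⟩
end

section
/- Let (X, T) be a topological space and let R be the union of all resolvable subspaces of X. Then R is closed in X and the subspace (R, T) is resolvable (if nonempty). -/
/-!
A pair `(A, B)` of disjoint sets, each dense in the other, resolves `closure A = closure B`.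
By Zorn's lemma there is a maximal such pair `(A, B)`. Every resolvable subspace `S` lies in
`closure A`: otherwise the trace of `S` on the open set `(closure A)ᶜ` is resolvable, and
adjoining its two dense halves to `A` and `B` enlarges the pair. Hence `R = closure A`.
-/

open Set TopologicalSpace

variable {X : Type*}

section Resolvable

variable [T : TopologicalSpace X]

theorem ResolvableFam.inter_isOpen {S V : Set X} {ι : Type*} (h : ResolvableFam T S ι)
    (hV : IsOpen V) (hne : (S ∩ V).Nonempty) : ResolvableFam T (S ∩ V) ι := by
  obtain ⟨D, hsub, -, hdense, hdisj⟩ := h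
  refine ⟨fun i => D i ∩ V, fun i => inter_subset_inter_left V (hsub i), fun i => ?_,
    fun i => ?_, fun i j hij => (hdisj hij).mono inter_subset_left inter_subset_left⟩
  · obtain ⟨x, hxS, hxV⟩ := hne
    obtain ⟨y, hyV, hyD⟩ := mem_closure_iff.1 (hdense i hxS) V hV hxV
    exact ⟨y, hyD, hyV⟩
  · rintro x ⟨hxS, hxV⟩
    rw [mem_closure_iff]
    intro W hW hxW
    obtain ⟨y, ⟨hyW, hyV⟩, hyD⟩ :=
      mem_closure_iff.1 (hdense i hxS) (W ∩ V) (hW.inter hV) ⟨hxW, hxV⟩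
    exact ⟨y, hyW, hyD, hyV⟩

structure IsResolvingPair (p : Set X × Set X) : Prop where
  disjoint : Disjoint p.1 p.2
  fst_subset_closure_snd : p.1 ⊆ closure p.2
  snd_subset_closure_fst : p.2 ⊆ closure p.1

theorem resolvableFam_fin_two_iff {S : Set X} :
    ResolvableFam T S (Fin 2) ↔
      ∃ p, IsResolvingPair p ∧ p.1.Nonempty ∧ p.1 ∪ p.2 ⊆ S ∧ S ⊆ closure p.1 := by
  constructor
  · rintro ⟨D, hsub, hne, hdense, hdisj⟩
    exact ⟨(D 0, D 1), ⟨hdisj zero_ne_one, (hsub 0).trans (hdense 1),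
      (hsub 1).trans (hdense 0)⟩, hne 0, union_subset (hsub 0) (hsub 1), hdense 0⟩
  · rintro ⟨⟨A, B⟩, ⟨hdisj, hAB, -⟩, hA, hsub, hS⟩
    have hclosure : closure A ⊆ closure B := closure_minimal hAB isClosed_closure
    refine ⟨![A, B], Fin.forall_fin_two.2 ⟨subset_union_left.trans hsub,
      subset_union_right.trans hsub⟩, Fin.forall_fin_two.2 ⟨hA, ?_⟩,
      Fin.forall_fin_two.2 ⟨hS, hS.trans hclosure⟩, ?_⟩
    · exact closure_nonempty_iff.1 (hA.mono hAB)
    · intro i j hij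
      fin_cases i <;> fin_cases j <;> simp_all [hdisj.symm]

theorem IsResolvingPair.sup {p q : Set X × Set X} (hp : IsResolvingPair p)
    (hq : IsResolvingPair q) (hpq : Disjoint (p.1 ∪ p.2) (q.1 ∪ q.2)) :
    IsResolvingPair (p ⊔ q) where
  disjoint := by
    simp only [Prod.fst_sup, Prod.snd_sup, sup_eq_union, disjoint_union_left,
      disjoint_union_right] at hpq ⊢
    exact ⟨⟨hp.disjoint, hpq.1.2.symm⟩, hpq.2.1, hq.disjoint⟩
  fst_subset_closure_snd :=
    (union_subset_union hp.fst_subset_closure_snd hq.fst_subset_closure_snd).trans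
      closure_union.symm.subset
  snd_subset_closure_fst :=
    (union_subset_union hp.snd_subset_closure_fst hq.snd_subset_closure_fst).trans
      closure_union.symm.subset

theorem IsChain.isResolvingPair_iUnion {c : Set (Set X × Set X)}
    (hc : c ⊆ {p | IsResolvingPair p}) (hchain : IsChain (· ≤ ·) c) :
    IsResolvingPair (⋃ p ∈ c, p.1, ⋃ p ∈ c, p.2) where
  disjoint := by
    refine disjoint_iUnion₂_left.2 fun p hp => disjoint_iUnion₂_right.2 fun q hq => ?_
    rcases hchain.total hp hq with hpq | hqp
    · exact (hc hq).disjoint.mono_left hpq.1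
    · exact (hc hp).disjoint.mono_right hqp.2
  fst_subset_closure_snd :=
    iUnion₂_subset fun p hp =>
      (hc hp).fst_subset_closure_snd.trans (closure_mono (subset_biUnion_of_mem hp))
  snd_subset_closure_fst :=
    iUnion₂_subset fun p hp =>
      (hc hp).snd_subset_closure_fst.trans (closure_mono (subset_biUnion_of_mem hp))

theorem exists_maximal_isResolvingPair : ∃ p : Set X × Set X, Maximal IsResolvingPair p :=
  zorn_le₀ {p | IsResolvingPair p} fun _ hc hchain =>
    ⟨_, hchain.isResolvingPair_iUnion hc, fun _ hp =>
      ⟨subset_biUnion_of_mem (u := Prod.fst) hp, subset_biUnion_of_mem (u := Prod.snd) hp⟩⟩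

theorem Maximal.subset_closure_of_resolvableFam {p : Set X × Set X}
    (hp : Maximal IsResolvingPair p) {S : Set X} (hS : ResolvableFam T S (Fin 2)) :
    S ⊆ closure p.1 := by
  intro x hxS
  by_contra hx
  obtain ⟨q, hq, hq_ne, hq_sub, -⟩ := resolvableFam_fin_two_iff.1 <|
    hS.inter_isOpen isClosed_closure.isOpen_compl ⟨x, hxS, hx⟩
  have hpq : Disjoint (p.1 ∪ p.2) (q.1 ∪ q.2) :=
    (disjoint_compl_right.mono_right (hq_sub.trans inter_subset_right)).mono_left
      (union_subset subset_closure hp.prop.snd_subset_closure_fst)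
  have hqp : q ≤ p := le_sup_right.trans (hp.le_of_ge (hp.prop.sup hq hpq) le_sup_left)
  obtain ⟨y, hy⟩ := hq_ne
  exact hpq.ne_of_mem (mem_union_left _ (hqp.1 hy)) (mem_union_left _ hy) rfl

end Resolvable

theorem stmt5 [T : TopologicalSpace X] (R : Set X)
    (hR : R = ⋃₀ {S : Set X | ResolvableFam T S (Fin 2)}) :
    IsClosed R ∧ (R.Nonempty → ResolvableFam T R (Fin 2)) := by
  obtain ⟨p, hp⟩ := exists_maximal_isResolvingPair (X := X)
  have hR_sub : R ⊆ closure p.1 :=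
    hR ▸ sUnion_subset fun S hS => hp.subset_closure_of_resolvableFam hS
  rcases p.1.eq_empty_or_nonempty with hempty | hne
  · rw [hempty, closure_empty, subset_empty_iff] at hR_sub
    simp [hR_sub]
  · have hres : ResolvableFam T (closure p.1) (Fin 2) :=
      resolvableFam_fin_two_iff.2 ⟨p, hp.prop, hne,
        union_subset subset_closure hp.prop.snd_subset_closure_fst, subset_rfl⟩
    have hR_eq : R = closure p.1 := hR_sub.antisymm (hR ▸ subset_sUnion_of_mem hres)
    exact hR_eq ▸ ⟨isClosed_closure, fun _ => hres⟩
end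

section
/- Let (X, T) be a topological space, let {D_η : η < κ} ∪ {E_η : η < κ} be a family of pairwise disjoint dense subsets partitioning X, and let U be a nonempty open set. Let W := U ∩ ⋃_{η<κ} D_η and let T'' be the topology generated by T ∪ {W, X∖W}. Then for each η < κ, the set D_η ∪ E_η is dense in (X, T''). -/
/-! Adjoining `W` and `Wᶜ` to a topology only cuts every neighbourhood of `x` down to the piece
of the partition `{W, Wᶜ}` containing `x`. So `D η ∪ E η` is dense as soon as it meets every
open set in both pieces: inside `W ⊆ U` the points of `D η` do it, since `D η ∩ U ⊆ W`, and
outside `W` the points of `E η` do it, since `E η` is disjoint from every `D μ`. -/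

open Set TopologicalSpace Filter Topology

variable {X : Type*}

theorem nhds_generateFrom_isOpen_union_pair [TopologicalSpace X] (W : Set X) (x : X) :
    @nhds X (generateFrom ({s | IsOpen s} ∪ {W, Wᶜ})) x = 𝓝 x ⊓ 𝓟 {y | y ∈ W ↔ x ∈ W} := by
  rw [generateFrom_union, generateFrom_setOfPred_isOpen, nhds_inf, nhds_generateFrom]
  have hpiece : {s | x ∈ s ∧ s ∈ ({W, Wᶜ} : Set (Set X))} = {{y | y ∈ W ↔ x ∈ W}} := by
    ext s
    by_cases hx : x ∈ W <;> simp [hx] <;> aesop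
  rw [hpiece, iInf_singleton]

theorem dense_generateFrom_isOpen_union_pair [TopologicalSpace X] {W S : Set X}
    (h : ∀ V, IsOpen V → ∀ x ∈ V, ∃ y ∈ V ∩ S, (y ∈ W ↔ x ∈ W)) :
    @Dense X (generateFrom ({s | IsOpen s} ∪ {W, Wᶜ})) S := by
  intro x
  rw [@mem_closure_iff_nhds, nhds_generateFrom_isOpen_union_pair]
  intro t ht
  obtain ⟨V, hVt, hV, hxV⟩ := mem_nhds_iff.1 (mem_inf_principal.1 ht)
  obtain ⟨y, ⟨hyV, hyS⟩, hyx⟩ := h V hV x hxV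
  exact ⟨y, hVt hyV hyx, hyS⟩

theorem stmt6_general [T : TopologicalSpace X] {ι : Type*} (D E : ι → Set X)
    (hdisj : Pairwise fun p q : ι ⊕ ι => Disjoint (Sum.elim D E p) (Sum.elim D E q))
    (hDdense : ∀ η, Dense (D η)) (hEdense : ∀ η, Dense (E η))
    (U : Set X) (hU : T.IsOpen U)
    (W : Set X) (hW : W = U ∩ ⋃ η, D η)
    (T' : TopologicalSpace X)
    (hT : T' = TopologicalSpace.generateFrom ({s | T.IsOpen s} ∪ {W, Wᶜ})) :
    ∀ η, @Dense X T' (D η ∪ E η) := by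
  intro η
  subst hT
  refine dense_generateFrom_isOpen_union_pair fun V hV x hxV => ?_
  by_cases hxW : x ∈ W
  · obtain ⟨y, hyD, hyVU⟩ := (hDdense η).exists_mem_open (hV.inter hU) ⟨x, hxV, (hW ▸ hxW).1⟩
    have hyW : y ∈ W := hW ▸ ⟨hyVU.2, mem_iUnion_of_mem η hyD⟩
    exact ⟨y, ⟨hyVU.1, .inl hyD⟩, iff_of_true hyW hxW⟩
  · obtain ⟨y, hyE, hyV⟩ := (hEdense η).exists_mem_open hV ⟨x, hxV⟩
    have hyW : y ∉ W := fun hyW => by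
      obtain ⟨μ, hyD⟩ := mem_iUnion.1 (hW ▸ hyW).2
      exact (hdisj (show Sum.inr η ≠ Sum.inl μ by simp)).ne_of_mem hyE hyD rfl
    exact ⟨y, ⟨hyV, .inr hyE⟩, iff_of_false hyW hxW⟩

theorem stmt6 [T : TopologicalSpace X] {ι : Type*} (D E : ι → Set X)
    (hdisj : Pairwise fun p q : ι ⊕ ι => Disjoint (Sum.elim D E p) (Sum.elim D E q))
    (hDdense : ∀ η, Dense (D η)) (hEdense : ∀ η, Dense (E η))
    (hpart : ((⋃ η, D η) ∪ (⋃ η, E η)) = univ)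
    (U : Set X) (hU : T.IsOpen U) (hUne : U.Nonempty)
    (W : Set X) (hW : W = U ∩ ⋃ η, D η)
    (T' : TopologicalSpace X)
    (hT : T' = TopologicalSpace.generateFrom ({s | T.IsOpen s} ∪ {W, Wᶜ})) :
    ∀ η, @Dense X T' (D η ∪ E η) :=
  stmt6_general (T := T) D E hdisj hDdense hEdense U hU W hW T' hT
end

section
/- Let 1 < n < ω and let (X, T) be an n-resolvable space having a nonempty subspace A such that (A, T) is ω-resolvable. Then there is a topology U ⊇ T on X such that (X, U) is exactly n-resolvable. -/
open Set TopologicalSpace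

variable {X : Type*}

/-!
Fix disjoint dense sets `E₀, …, Eₙ₋₁` of `(X, T)` and, by Zorn's lemma, a finest expansion `m`
of `T` in which every `Eᵢ` is still dense. Being finest means that a set `V` that is not `m`-open
cannot be added to `m`: some `Eᵢ` misses `O ∩ V ≠ ∅` for an `m`-open `O`. Given a dense codense
set `D` and a nonempty open `O`, applying this to `V = O \ D` yields an index `i` and a nonempty
open `O' ⊆ O` with `Eᵢ ∩ O' ⊆ D`. If `D₀, …, Dₙ` were disjoint and dense, iterating this
`n + 1` times would assign the same `i` to two of them on one nonempty open set, on which the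
dense set `Eᵢ` would lie in both.
-/

open Topology

theorem TopologicalSpace.isTopologicalBasis_generateFrom_of_inter_mem {B : Set (Set X)}
    (hB : ⋃₀ B = univ) (hi : ∀ a ∈ B, ∀ b ∈ B, a ∩ b ∈ B) :
    @IsTopologicalBasis X (generateFrom B) B :=
  @IsTopologicalBasis.mk X (generateFrom B) B
    (fun a ha b hb _ hx => ⟨a ∩ b, hi a ha b hb, hx, subset_rfl⟩) hB rfl

theorem resolvableFam_univ_iff {U : TopologicalSpace X} {ι : Type*} :
    ResolvableFam U univ ι ↔ ∃ D : ι → Set X, (∀ i, (D i).Nonempty) ∧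
      (∀ i, @Dense X U (D i)) ∧ Pairwise fun i j => Disjoint (D i) (D j) := by
  simp only [ResolvableFam, subset_univ, implies_true, true_and, univ_subset_iff,
    ← @dense_iff_closure_eq X U]

section DenseTopologies

variable {ι : Type*} {E : ι → Set X} {t : TopologicalSpace X}

def denseTopologies (E : ι → Set X) : Set (TopologicalSpace X) :=
  {U | ∀ i, @Dense X U (E i)}

theorem exists_le_minimal_mem_denseTopologies (T : TopologicalSpace X)
    (hE : ∀ i, @Dense X T (E i)) : ∃ m ≤ T, Minimal (· ∈ denseTopologies E) m := by
  -- the open sets of a chain form a basis of a topology finer than every member of the chain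
  have hchain : ∀ c ⊆ denseTopologies E, IsChain (· ≥ ·) c →
      ∀ U ∈ c, ∃ lb ∈ denseTopologies E, ∀ t ∈ c, lb ≤ t := by
    intro c hcS hc U hU
    let B : Set (Set X) := {s | ∃ t ∈ c, IsOpen[t] s}
    have hB : ⋃₀ B = univ :=
      sUnion_eq_univ_iff.2 fun _ => ⟨univ, ⟨U, hU, @isOpen_univ X U⟩, trivial⟩
    have hi : ∀ a ∈ B, ∀ b ∈ B, a ∩ b ∈ B := by
      rintro a ⟨t₁, ht₁, ha⟩ b ⟨t₂, ht₂, hb⟩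
      rcases hc.total ht₁ ht₂ with h | h
      · exact ⟨t₂, ht₂, @IsOpen.inter X t₂ _ _ (h a ha) hb⟩
      · exact ⟨t₁, ht₁, @IsOpen.inter X t₁ _ _ ha (h b hb)⟩
    refine ⟨generateFrom B, fun i => ?_, fun t ht _ hs => isOpen_generateFrom_of_mem ⟨t, ht, hs⟩⟩
    refine (@IsTopologicalBasis.dense_iff X (generateFrom B) B
      (isTopologicalBasis_generateFrom_of_inter_mem hB hi) (E i)).2 ?_
    rintro o ⟨t, ht, ho⟩ hne
    exact @Dense.inter_open_nonempty X t _ (hcS ht i) o ho hne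
  exact @zorn_le_nonempty₀ (TopologicalSpace X)ᵒᵈ _ (denseTopologies E) hchain T hE

theorem isOpen_of_minimal_of_forall_dense_inter (hm : Minimal (· ∈ denseTopologies E) t)
    {V : Set X} (hV : ∀ i O, IsOpen O → (O ∩ V).Nonempty → (O ∩ V ∩ E i).Nonempty) :
    IsOpen V := by
  let B : Set (Set X) := {s | ∃ O, IsOpen O ∧ (O = s ∨ O ∩ V = s)}
  have hB : ⋃₀ B = univ :=
    sUnion_eq_univ_iff.2 fun _ => ⟨univ, ⟨univ, isOpen_univ, Or.inl rfl⟩, trivial⟩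
  have hi : ∀ a ∈ B, ∀ b ∈ B, a ∩ b ∈ B := by
    rintro _ ⟨O₁, hO₁, rfl | rfl⟩ _ ⟨O₂, hO₂, rfl | rfl⟩ <;>
      refine ⟨O₁ ∩ O₂, hO₁.inter hO₂, ?_⟩
    exacts [Or.inl rfl, Or.inr (inter_assoc O₁ O₂ V), Or.inr (inter_right_comm O₁ V O₂).symm,
      Or.inr (inter_inter_distrib_right O₁ O₂ V)]
  have hBt : generateFrom B ≤ t := fun s hs => isOpen_generateFrom_of_mem ⟨s, hs, Or.inl rfl⟩
  have hBE : ∀ i, @Dense X (generateFrom B) (E i) := fun i =>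
    (@IsTopologicalBasis.dense_iff X (generateFrom B) B
      (isTopologicalBasis_generateFrom_of_inter_mem hB hi) (E i)).2 <| by
      rintro o ⟨O, hO, rfl | rfl⟩ hne
      exacts [(hm.prop i).inter_open_nonempty O hO hne, hV i O hO hne]
  exact hm.2 hBE hBt V (isOpen_generateFrom_of_mem ⟨univ, isOpen_univ, Or.inr (univ_inter V)⟩)

theorem exists_isOpen_inter_subset_of_minimal (hm : Minimal (· ∈ denseTopologies E) t)
    {D O : Set X} (hD : Dense D) (hDc : Dense Dᶜ) (hO : IsOpen O) (hne : O.Nonempty) :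
    ∃ i O', IsOpen O' ∧ O'.Nonempty ∧ O' ⊆ O ∧ E i ∩ O' ⊆ D := by
  have hV : ¬ IsOpen (O \ D) := fun hV =>
    let ⟨_, hx, hxD⟩ := hD.inter_open_nonempty _ hV (hDc.inter_open_nonempty O hO hne)
    hx.2 hxD
  obtain ⟨i, O₁, hO₁, hne₁, hdisj⟩ : ∃ i O₁, IsOpen O₁ ∧ (O₁ ∩ (O \ D)).Nonempty ∧
      ¬ (O₁ ∩ (O \ D) ∩ E i).Nonempty := by
    by_contra! h
    exact hV (isOpen_of_minimal_of_forall_dense_inter hm h)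
  refine ⟨i, O₁ ∩ O, hO₁.inter hO, hne₁.mono fun x hx => ⟨hx.1, hx.2.1⟩, inter_subset_right,
    fun x ⟨hxE, hxO₁, hxO⟩ => ?_⟩
  by_contra hxD
  exact hdisj ⟨x, ⟨hxO₁, hxO, hxD⟩, hxE⟩

theorem exists_isOpen_forall_inter_subset_of_minimal (hm : Minimal (· ∈ denseTopologies E) t)
    {k : ℕ} {D : Fin k → Set X} (hD : ∀ j, Dense (D j)) (hDc : ∀ j, Dense (D j)ᶜ)
    {O : Set X} (hO : IsOpen O) (hne : O.Nonempty) :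
    ∃ O', IsOpen O' ∧ O'.Nonempty ∧ ∃ f : Fin k → ι, ∀ j, E (f j) ∩ O' ⊆ D j := by
  induction k with
  | zero => exact ⟨O, hO, hne, Fin.elim0, fun j => j.elim0⟩
  | succ k ih =>
    obtain ⟨O₁, hO₁, hne₁, f, hf⟩ := ih (fun j => hD j.succ) (fun j => hDc j.succ)
    obtain ⟨i, O₂, hO₂, hne₂, hO₂₁, hi⟩ :=
      exists_isOpen_inter_subset_of_minimal hm (hD 0) (hDc 0) hO₁ hne₁
    refine ⟨O₂, hO₂, hne₂, Fin.cons i f, Fin.cases hi fun j => ?_⟩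
    simpa using (inter_subset_inter_right _ hO₂₁).trans (hf j)

theorem not_resolvableFam_of_minimal [Fintype ι] {k : ℕ} (hk : 1 < k)
    (hcard : Fintype.card ι < k) (hm : Minimal (· ∈ denseTopologies E) t) :
    ¬ ResolvableFam t univ (Fin k) := by
  rw [resolvableFam_univ_iff]
  rintro ⟨D, hDne, hD, hDdisj⟩
  have : Nontrivial (Fin k) := Fin.nontrivial_iff_two_le.2 hk
  have hDc : ∀ j, Dense (D j)ᶜ := fun j =>
    let ⟨j', hj'⟩ := exists_ne j
    (hD j').mono (hDdisj hj').subset_compl_right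
  obtain ⟨x₀, -⟩ := hDne ⟨0, by omega⟩
  obtain ⟨O, hO, hne, f, hf⟩ :=
    exists_isOpen_forall_inter_subset_of_minimal hm hD hDc isOpen_univ ⟨x₀, trivial⟩
  obtain ⟨j, j', hjj', hff⟩ := Fintype.exists_ne_map_eq_of_card_lt f (by simpa using hcard)
  obtain ⟨x, hxO, hxE⟩ := (hm.prop (f j)).inter_open_nonempty O hO hne
  exact (hDdisj hjj').le_bot ⟨hf j ⟨hxE, hxO⟩, hf j' ⟨hff ▸ hxE, hxO⟩⟩

end DenseTopologies

theorem stmt7_general [T : TopologicalSpace X] (n : ℕ) (hn : 1 < n)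
    (hres : ResolvableFam T (univ : Set X) (Fin n)) :
    ∃ U : TopologicalSpace X, (∀ s, T.IsOpen s → U.IsOpen s) ∧
      ResolvableFam U (univ : Set X) (Fin n) ∧
      ¬ ResolvableFam U (univ : Set X) (Fin (n + 1)) := by
  obtain ⟨E, hEne, hE, hEdisj⟩ := resolvableFam_univ_iff.1 hres
  obtain ⟨m, hmT, hm⟩ := exists_le_minimal_mem_denseTopologies T hE
  exact ⟨m, hmT, resolvableFam_univ_iff.2 ⟨E, hEne, hm.prop, hEdisj⟩,
    not_resolvableFam_of_minimal (by omega) (by simp) hm⟩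

theorem stmt7 [T : TopologicalSpace X] (n : ℕ) (hn : 1 < n)
    (hres : ResolvableFam T (univ : Set X) (Fin n))
    (A : Set X) (hA : A.Nonempty) (hAres : ResolvableFam T A ℕ) :
    ∃ U : TopologicalSpace X, (∀ s, T.IsOpen s → U.IsOpen s) ∧
      ResolvableFam U (univ : Set X) (Fin n) ∧
      ¬ ResolvableFam U (univ : Set X) (Fin (n + 1)) :=
  stmt7_general (T := T) n hn hres
end

section
/- Let 1 < n < ω. Every space (X, T) that is (n+1)-resolvable but not ω-resolvable admits an expansion U ⊇ T such that (X, U) is exactly n-resolvable and (X, U) is not quasi-regular. -/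
open Set TopologicalSpace

variable {X : Type*}

namespace Stmt9Aux

/-- density in "meets every nonempty open set" form, from closure form -/
lemma dense_meets {U : TopologicalSpace X} {A : Set X} (h : univ ⊆ @closure X U A) :
    ∀ s, U.IsOpen s → s.Nonempty → (s ∩ A).Nonempty := by
  letI := U
  rintro s hs ⟨x, hx⟩
  exact mem_closure_iff.mp (h (mem_univ x)) s hs hx

lemma meets_dense {U : TopologicalSpace X} {A : Set X}
    (h : ∀ s, U.IsOpen s → s.Nonempty → (s ∩ A).Nonempty) :
    univ ⊆ @closure X U A := by
  letI := U
  intro x _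
  exact mem_closure_iff.mpr fun o ho hxo => h o ho ⟨x, hxo⟩

lemma not_mem_closure {U : TopologicalSpace X} {A : Set X} {x : X}
    (h : x ∉ @closure X U A) :
    ∃ s, U.IsOpen s ∧ x ∈ s ∧ s ∩ A = ∅ := by
  letI := U
  by_contra hc
  push_neg at hc
  exact h (mem_closure_iff.mpr fun o ho hxo => hc o ho hxo)

/-- the expansion of a topology by one new set `A` -/
def expandT (U : TopologicalSpace X) (A : Set X) : TopologicalSpace X where
  IsOpen s := ∀ x ∈ s, ∃ O, U.IsOpen O ∧ x ∈ O ∧ (O ⊆ s ∨ (x ∈ A ∧ O ∩ A ⊆ s))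
  isOpen_univ := fun x _ => ⟨univ, U.isOpen_univ, mem_univ x, Or.inl subset_rfl⟩
  isOpen_inter := by
    rintro s t hs ht x ⟨hxs, hxt⟩
    obtain ⟨O₁, hO₁, hx₁, h₁⟩ := hs x hxs
    obtain ⟨O₂, hO₂, hx₂, h₂⟩ := ht x hxt
    refine ⟨O₁ ∩ O₂, U.isOpen_inter _ _ hO₁ hO₂, ⟨hx₁, hx₂⟩, ?_⟩
    rcases h₁ with h₁ | ⟨hxA, h₁⟩
    · rcases h₂ with h₂ | ⟨hxA, h₂⟩
      · exact Or.inl fun y hy => ⟨h₁ hy.1, h₂ hy.2⟩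
      · exact Or.inr ⟨hxA, fun y hy => ⟨h₁ hy.1.1, h₂ ⟨hy.1.2, hy.2⟩⟩⟩
    · rcases h₂ with h₂ | ⟨hxA2, h₂⟩
      · exact Or.inr ⟨hxA, fun y hy => ⟨h₁ ⟨hy.1.1, hy.2⟩, h₂ hy.1.2⟩⟩
      · exact Or.inr ⟨hxA, fun y hy => ⟨h₁ ⟨hy.1.1, hy.2⟩, h₂ ⟨hy.1.2, hy.2⟩⟩⟩
  isOpen_sUnion := by
    intro S hS x hx
    obtain ⟨s, hsS, hxs⟩ := hx
    obtain ⟨O, hO, hxO, h⟩ := hS s hsS x hxs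
    refine ⟨O, hO, hxO, ?_⟩
    rcases h with h | ⟨hA, h⟩
    · exact Or.inl (h.trans (subset_sUnion_of_mem hsS))
    · exact Or.inr ⟨hA, h.trans (subset_sUnion_of_mem hsS)⟩

lemma isOpen_expandT_of {U : TopologicalSpace X} {A s : Set X} (h : U.IsOpen s) :
    (expandT U A).IsOpen s :=
  fun x hx => ⟨s, h, hx, Or.inl subset_rfl⟩

lemma isOpen_expandT_self (U : TopologicalSpace X) (A : Set X) :
    (expandT U A).IsOpen A :=
  fun x hx => ⟨univ, U.isOpen_univ, mem_univ x, Or.inr ⟨hx, inter_subset_right⟩⟩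

/-- The collection of "good" expansions of `T`:
(1) expansion, (2) each `D i`, `i < n`, is dense, (3) points outside `W` keep their
`T`-neighborhood basis, (4) `T`-open `T`-dense sets stay dense. -/
def Good (T U : TopologicalSpace X) {n : ℕ} (D : Fin (n + 1) → Set X) (W : Set X) : Prop :=
  (∀ s, T.IsOpen s → U.IsOpen s) ∧
  (∀ i : Fin (n + 1), (i : ℕ) < n → ∀ s, U.IsOpen s → s.Nonempty → (s ∩ D i).Nonempty) ∧
  (∀ x, x ∉ W → ∀ s, U.IsOpen s → x ∈ s → ∃ G, T.IsOpen G ∧ x ∈ G ∧ G ⊆ s) ∧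
  (∀ H, T.IsOpen H → (∀ s, T.IsOpen s → s.Nonempty → (s ∩ H).Nonempty) →
    ∀ s, U.IsOpen s → s.Nonempty → (s ∩ H).Nonempty)

/-- expanding a good topology by a suitable set stays good -/
lemma good_expand {T U : TopologicalSpace X} {n : ℕ} {D : Fin (n + 1) → Set X} {W : Set X}
    (hU : Good T U D W) {A : Set X}
    (h1 : ∀ i : Fin (n + 1), (i : ℕ) < n → ∀ s, U.IsOpen s → (s ∩ A).Nonempty →
      ((s ∩ A) ∩ D i).Nonempty)
    (h2 : ∀ x, x ∈ A → x ∉ W → ∀ s, U.IsOpen s → x ∈ s → ∃ G, T.IsOpen G ∧ x ∈ G ∧ G ⊆ s ∩ A)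
    (h3 : ∀ H, T.IsOpen H → (∀ s, T.IsOpen s → s.Nonempty → (s ∩ H).Nonempty) →
      ∀ s, U.IsOpen s → (s ∩ A).Nonempty → ((s ∩ A) ∩ H).Nonempty) :
    Good T (expandT U A) D W := by
  refine ⟨fun s hs => isOpen_expandT_of (hU.1 s hs), ?_, ?_, ?_⟩
  · intro i hi s hs hne
    obtain ⟨x, hx⟩ := hne
    obtain ⟨O, hO, hxO, hcase⟩ := hs x hx
    rcases hcase with hsub | ⟨hxA, hsub⟩
    · obtain ⟨y, hy1, hy2⟩ := hU.2.1 i hi O hO ⟨x, hxO⟩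
      exact ⟨y, hsub hy1, hy2⟩
    · obtain ⟨y, hy1, hy2⟩ := h1 i hi O hO ⟨x, hxO, hxA⟩
      exact ⟨y, hsub hy1, hy2⟩
  · intro x hxW s hs hxs
    obtain ⟨O, hO, hxO, hcase⟩ := hs x hxs
    rcases hcase with hsub | ⟨hxA, hsub⟩
    · obtain ⟨G, hG, hxG, hGO⟩ := hU.2.2.1 x hxW O hO hxO
      exact ⟨G, hG, hxG, hGO.trans hsub⟩
    · obtain ⟨G, hG, hxG, hGO⟩ := h2 x hxA hxW O hO hxO
      exact ⟨G, hG, hxG, hGO.trans hsub⟩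
  · intro H hH hHd s hs hne
    obtain ⟨x, hx⟩ := hne
    obtain ⟨O, hO, hxO, hcase⟩ := hs x hx
    rcases hcase with hsub | ⟨hxA, hsub⟩
    · obtain ⟨y, hy1, hy2⟩ := hU.2.2.2 H hH hHd O hO ⟨x, hxO⟩
      exact ⟨y, hsub hy1, hy2⟩
    · obtain ⟨y, hy1, hy2⟩ := h3 H hH hHd O hO ⟨x, hxO, hxA⟩
      exact ⟨y, hsub hy1, hy2⟩

/-- Zorn: there is a maximal good expansion. -/
lemma exists_max (T : TopologicalSpace X) {n : ℕ} (D : Fin (n + 1) → Set X) (W : Set X)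
    (hbase : Good T T D W) :
    ∃ U : TopologicalSpace X, Good T U D W ∧
      ∀ V : TopologicalSpace X, Good T V D W → (∀ s, U.IsOpen s → V.IsOpen s) →
        ∀ s, V.IsOpen s → U.IsOpen s := by
  classical
  set 𝒮 : Set (Set (Set X)) :=
    {𝒪 | ∃ U : TopologicalSpace X, Good T U D W ∧ 𝒪 = {s | U.IsOpen s}} with h𝒮
  have hzorn : ∃ m, {s | T.IsOpen s} ⊆ m ∧ Maximal (· ∈ 𝒮) m := by
    refine zorn_subset_nonempty 𝒮 ?_ _ ⟨T, hbase, rfl⟩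
    intro c hcS hchain hcne
    obtain ⟨𝒪₀, h𝒪₀⟩ := hcne
    obtain ⟨U₀, hU₀, h𝒪₀eq⟩ := hcS h𝒪₀
    -- the chain topology
    refine ⟨{s | ∀ x ∈ s, ∃ b ∈ ⋃₀ c, x ∈ b ∧ b ⊆ s},
      ⟨⟨fun s => ∀ x ∈ s, ∃ b ∈ ⋃₀ c, x ∈ b ∧ b ⊆ s, ?_, ?_, ?_⟩, ⟨?_, ?_, ?_, ?_⟩, rfl⟩, ?_⟩
    · -- univ
      intro x _
      exact ⟨univ, ⟨𝒪₀, h𝒪₀, by rw [h𝒪₀eq]; exact U₀.isOpen_univ⟩, mem_univ x, subset_rfl⟩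
    · -- inter
      rintro s t hs ht x ⟨hxs, hxt⟩
      obtain ⟨b₁, ⟨𝒪₁, h𝒪₁, hb₁⟩, hxb₁, hb₁s⟩ := hs x hxs
      obtain ⟨b₂, ⟨𝒪₂, h𝒪₂, hb₂⟩, hxb₂, hb₂t⟩ := ht x hxt
      have key : ∃ 𝒪 ∈ c, b₁ ∈ 𝒪 ∧ b₂ ∈ 𝒪 := by
        rcases eq_or_ne 𝒪₁ 𝒪₂ with rfl | hne
        · exact ⟨𝒪₁, h𝒪₁, hb₁, hb₂⟩
        · rcases hchain h𝒪₁ h𝒪₂ hne with h | h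
          · exact ⟨𝒪₂, h𝒪₂, h hb₁, hb₂⟩
          · exact ⟨𝒪₁, h𝒪₁, hb₁, h hb₂⟩
      obtain ⟨𝒪, h𝒪, hb₁', hb₂'⟩ := key
      obtain ⟨U', hU', rfl⟩ := hcS h𝒪
      exact ⟨b₁ ∩ b₂, ⟨_, h𝒪, U'.isOpen_inter _ _ hb₁' hb₂'⟩, ⟨hxb₁, hxb₂⟩,
        fun y hy => ⟨hb₁s hy.1, hb₂t hy.2⟩⟩
    · -- sUnion
      intro S hS x hx
      obtain ⟨s, hsS, hxs⟩ := hx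
      obtain ⟨b, hb, hxb, hbs⟩ := hS s hsS x hxs
      exact ⟨b, hb, hxb, hbs.trans (subset_sUnion_of_mem hsS)⟩
    · -- Good (1)
      intro s hs x hx
      exact ⟨s, ⟨𝒪₀, h𝒪₀, by rw [h𝒪₀eq]; exact hU₀.1 s hs⟩, hx, subset_rfl⟩
    · -- Good (2)
      intro i hi s hs hne
      obtain ⟨x, hx⟩ := hne
      obtain ⟨b, ⟨𝒪, h𝒪, hb𝒪⟩, hxb, hbs⟩ := hs x hx
      obtain ⟨U', hU', rfl⟩ := hcS h𝒪
      obtain ⟨y, hy1, hy2⟩ := hU'.2.1 i hi b hb𝒪 ⟨x, hxb⟩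
      exact ⟨y, hbs hy1, hy2⟩
    · -- Good (3)
      intro x hxW s hs hxs
      obtain ⟨b, ⟨𝒪, h𝒪, hb𝒪⟩, hxb, hbs⟩ := hs x hxs
      obtain ⟨U', hU', rfl⟩ := hcS h𝒪
      obtain ⟨G, hG, hxG, hGb⟩ := hU'.2.2.1 x hxW b hb𝒪 hxb
      exact ⟨G, hG, hxG, hGb.trans hbs⟩
    · -- Good (4)
      intro H hH hHd s hs hne
      obtain ⟨x, hx⟩ := hne
      obtain ⟨b, ⟨𝒪, h𝒪, hb𝒪⟩, hxb, hbs⟩ := hs x hx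
      obtain ⟨U', hU', rfl⟩ := hcS h𝒪
      obtain ⟨y, hy1, hy2⟩ := hU'.2.2.2 H hH hHd b hb𝒪 ⟨x, hxb⟩
      exact ⟨y, hbs hy1, hy2⟩
    · -- upper bound
      intro 𝒪 h𝒪 s hs
      exact fun x hx => ⟨s, ⟨𝒪, h𝒪, hs⟩, hx, subset_rfl⟩
  obtain ⟨m, -, hmax⟩ := hzorn
  obtain ⟨U, hU, rfl⟩ := hmax.1
  refine ⟨U, hU, ?_⟩
  intro V hV hUV s hs
  have hsub : {s | U.IsOpen s} ⊆ {s | V.IsOpen s} := fun t ht => hUV t ht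
  exact hmax.2 ⟨V, hV, rfl⟩ hsub hs

/-- the matrix-of-opens induction: rows `R`, columns `Cl`, strictly more columns than rows,
each column "hits" every nonempty open subset of `O` within some row; rows of `G` are
pairwise disjoint across columns.  This is contradictory. -/
lemma config_ind (U : TopologicalSpace X) {n : ℕ} (G : Fin n → Fin (n + 1) → Set X)
    (hGopen : ∀ i j, U.IsOpen (G i j))
    (hGdisj : ∀ i j j', j ≠ j' → G i j ∩ G i j' = ∅) :
    ∀ (r : ℕ) (R : Finset (Fin n)) (Cl : Finset (Fin (n + 1))),
      R.card = r → R.card + 1 ≤ Cl.card →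
      ∀ O : Set X, U.IsOpen O → O.Nonempty →
      (∀ j ∈ Cl, ∀ O', U.IsOpen O' → O' ⊆ O → O'.Nonempty → ∃ i ∈ R, (G i j ∩ O').Nonempty) →
      False := by
  intro r
  induction r with
  | zero =>
    intro R Cl hcard hle O hO hOne hinv
    obtain ⟨j, hj⟩ := Finset.card_pos.mp (by omega : 0 < Cl.card)
    obtain ⟨i, hi, -⟩ := hinv j hj O hO subset_rfl hOne
    rw [Finset.card_eq_zero.mp hcard] at hi
    exact absurd hi (Finset.notMem_empty i)
  | succ r ih =>
    intro R Cl hcard hle O hO hOne hinv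
    obtain ⟨j₀, hj₀⟩ := Finset.card_pos.mp (by omega : 0 < Cl.card)
    obtain ⟨i₀, hi₀, hne₀⟩ := hinv j₀ hj₀ O hO subset_rfl hOne
    have hcard' : (R.erase i₀).card = r := by
      rw [Finset.card_erase_of_mem hi₀, hcard]
      omega
    have hcardCl : (Cl.erase j₀).card = Cl.card - 1 := Finset.card_erase_of_mem hj₀
    refine ih (R.erase i₀) (Cl.erase j₀) hcard' (by omega) (G i₀ j₀ ∩ O)
      (U.isOpen_inter _ _ (hGopen _ _) hO) hne₀ ?_
    intro j hj O' hO' hsub hO'ne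
    obtain ⟨i, hi, hne⟩ := hinv j (Finset.mem_of_mem_erase hj) O' hO'
      (hsub.trans inter_subset_right) hO'ne
    have hij : i ≠ i₀ := by
      rintro rfl
      obtain ⟨x, hx1, hx2⟩ := hne
      have hx3 : x ∈ G i j₀ := (hsub hx2).1
      have hd := hGdisj i j j₀ (Finset.mem_erase.mp hj).1
      exact (eq_empty_iff_forall_notMem.mp hd x) ⟨hx1, hx3⟩
    exact ⟨i, Finset.mem_erase.mpr ⟨hij, hi⟩, hne⟩

end Stmt9Aux

open Stmt9Aux in
theorem stmt9 [T : TopologicalSpace X] (n : ℕ) (hn : 1 < n)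
    (hres : ResolvableFam T (univ : Set X) (Fin (n + 1)))
    (hnotomega : ¬ ResolvableFam T (univ : Set X) ℕ) :
    ∃ U : TopologicalSpace X, (∀ s, T.IsOpen s → U.IsOpen s) ∧
      ResolvableFam U (univ : Set X) (Fin n) ∧
      ¬ ResolvableFam U (univ : Set X) (Fin (n + 1)) ∧
      ¬ QuasiRegular U := by
  classical
  obtain ⟨D, -, hDne, hDcl, hDdisj⟩ := hres
  have hn0 : 0 < n := by omega
  have hDdense : ∀ i : Fin (n + 1), ∀ s, T.IsOpen s → s.Nonempty → (s ∩ D i).Nonempty :=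
    fun i => dense_meets (hDcl i)
  -- the union of the first n dense sets
  set W : Set X := ⋃ i : Fin n, D i.castSucc with hWdef
  have hDW : ∀ i : Fin (n + 1), (i : ℕ) < n → D i ⊆ W := by
    intro i h x hx
    have e : (⟨(i : ℕ), h⟩ : Fin n).castSucc = i := Fin.ext rfl
    exact mem_iUnion.mpr ⟨⟨(i : ℕ), h⟩, by rw [e]; exact hx⟩
  have hzeroW : D 0 ⊆ W := hDW 0 (by simp [hn0])
  have hbase : Good T T D W := by
    refine ⟨fun s hs => hs, fun i _ => hDdense i, fun x _ s hs hxs => ⟨s, hs, hxs, subset_rfl⟩,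
      fun H _ hHd s hs hne => hHd s hs hne⟩
  obtain ⟨Ustar, hGood, hmax⟩ := exists_max T D W hbase
  have hXne : (univ : Set X).Nonempty := (hDne 0).mono (subset_univ _)
  -- W is open in Ustar
  have hWopen : Ustar.IsOpen W := by
    refine hmax (expandT Ustar W) (good_expand hGood ?_ ?_ ?_)
      (fun s hs => isOpen_expandT_of hs) W (isOpen_expandT_self _ _)
    · intro i hi s hs hne
      obtain ⟨x, hx, -⟩ := hne
      obtain ⟨y, hy1, hy2⟩ := hGood.2.1 i hi s hs ⟨x, hx⟩
      exact ⟨y, ⟨hy1, hDW i hi hy2⟩, hy2⟩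
    · intro x hxA hxW
      exact absurd hxA hxW
    · intro H hH hHd s hs hne
      obtain ⟨x, hx, -⟩ := hne
      have hsH : Ustar.IsOpen (s ∩ H) := Ustar.isOpen_inter _ _ hs (hGood.1 H hH)
      have hsHne : (s ∩ H).Nonempty := hGood.2.2.2 H hH hHd s hs ⟨x, hx⟩
      obtain ⟨y, hy1, hy2⟩ := hGood.2.1 0 (by simp [hn0]) _ hsH hsHne
      exact ⟨y, ⟨⟨hy1.1, hzeroW hy2⟩, hy1.2⟩⟩
  have hWne : W.Nonempty := (hDne 0).mono hzeroW
  refine ⟨Ustar, hGood.1, ?_, ?_, ?_⟩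
  · -- n-resolvable
    refine ⟨fun i => D i.castSucc, fun _ => subset_univ _, fun i => hDne _, ?_, ?_⟩
    · intro i
      refine meets_dense ?_
      exact hGood.2.1 i.castSucc (by simp) 
    · intro i j hij
      exact hDdisj ((Fin.castSucc_injective n).ne hij)
  · -- not (n+1)-resolvable
    intro hcon
    obtain ⟨E, -, -, hEcl, hEdisj⟩ := hcon
    have hEdense : ∀ j : Fin (n + 1), ∀ s, Ustar.IsOpen s → s.Nonempty → (s ∩ E j).Nonempty :=
      fun j => dense_meets (hEcl j)
    -- Claim 1: everywhere, for each j, some D i (i < n) locally lives inside E j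
    have claim1 : ∀ O, Ustar.IsOpen O → O.Nonempty → ∀ j : Fin (n + 1),
        ∃ i : Fin (n + 1), ∃ _ : (i : ℕ) < n, ∃ O', Ustar.IsOpen O' ∧ O' ⊆ O ∧
          O'.Nonempty ∧ D i ∩ O' ⊆ E j := by
      intro O hO hOne j
      by_contra hno
      have hplus : ∀ i : Fin (n + 1), (i : ℕ) < n → ∀ O', Ustar.IsOpen O' → O' ⊆ O →
          O'.Nonempty → ((D i ∩ O') \ E j).Nonempty := by
        intro i hi O' hO' hsub hne'
        rcases eq_empty_or_nonempty ((D i ∩ O') \ E j) with he | h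
        · refine absurd ⟨i, hi, O', hO', hsub, hne', ?_⟩ hno
          intro x hx
          by_contra hxE
          exact (eq_empty_iff_forall_notMem.mp he x) ⟨hx, hxE⟩
        · exact h
      -- the "locally away from O" open set
      set N : Set X := ⋃₀ {V | Ustar.IsOpen V ∧ V ∩ O = ∅} with hNdef
      have hNopen : Ustar.IsOpen N := Ustar.isOpen_sUnion _ fun t ht => ht.1
      have hNO : N ∩ O = ∅ := by
        rw [eq_empty_iff_forall_notMem]
        rintro x ⟨⟨V, hV, hxV⟩, hxO⟩
        exact (eq_empty_iff_forall_notMem.mp hV.2 x) ⟨hxV, hxO⟩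
      set A : Set X := ((O ∩ W) \ E j) ∪ N with hAdef
      have hNA : N ⊆ A := subset_union_right
      have hOWA : (O ∩ W) \ E j ⊆ A := subset_union_left
      -- adding A keeps the topology good
      have hAgood : Good T (expandT Ustar A) D W := by
        refine good_expand hGood ?_ ?_ ?_
        · intro i hi s hs hne
          obtain ⟨x₀, hx₀s, hx₀A⟩ := hne
          rcases hx₀A with hx₀ | hx₀
          · -- x₀ ∈ O ∩ W \ E j
            have hsO : Ustar.IsOpen (s ∩ O) := Ustar.isOpen_inter _ _ hs hO
            have hsOne : (s ∩ O).Nonempty := ⟨x₀, hx₀s, hx₀.1.1⟩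
            obtain ⟨y, ⟨hyD, hys, hyO⟩, hyE⟩ :=
              hplus i hi (s ∩ O) hsO inter_subset_right hsOne
            exact ⟨y, ⟨hys, hOWA ⟨⟨hyO, hDW i hi hyD⟩, hyE⟩⟩, hyD⟩
          · -- x₀ ∈ N
            have hsN : Ustar.IsOpen (s ∩ N) := Ustar.isOpen_inter _ _ hs hNopen
            obtain ⟨y, ⟨hys, hyN⟩, hyD⟩ := hGood.2.1 i hi (s ∩ N) hsN ⟨x₀, hx₀s, hx₀⟩
            exact ⟨y, ⟨hys, hNA hyN⟩, hyD⟩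
        · intro x hxA hxW s hs hxs
          have hxN : x ∈ N := by
            rcases hxA with hx | hx
            · exact absurd hx.1.2 hxW
            · exact hx
          have hsN : Ustar.IsOpen (s ∩ N) := Ustar.isOpen_inter _ _ hs hNopen
          obtain ⟨G, hG, hxG, hGs⟩ := hGood.2.2.1 x hxW (s ∩ N) hsN ⟨hxs, hxN⟩
          exact ⟨G, hG, hxG, fun y hy => ⟨(hGs hy).1, hNA (hGs hy).2⟩⟩
        · intro H hH hHd s hs hne
          obtain ⟨x₀, hx₀s, hx₀A⟩ := hne
          rcases hx₀A with hx₀ | hx₀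
          · have hsO : Ustar.IsOpen (s ∩ O) := Ustar.isOpen_inter _ _ hs hO
            have hsOH : Ustar.IsOpen (s ∩ O ∩ H) :=
              Ustar.isOpen_inter _ _ hsO (hGood.1 H hH)
            have hsOHne : (s ∩ O ∩ H).Nonempty :=
              hGood.2.2.2 H hH hHd (s ∩ O) hsO ⟨x₀, hx₀s, hx₀.1.1⟩
            obtain ⟨y, ⟨hyD, ⟨hys, hyO⟩, hyH⟩, hyE⟩ :=
              hplus 0 (by simp [hn0]) (s ∩ O ∩ H) hsOH
                (inter_subset_left.trans inter_subset_right) hsOHne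
            exact ⟨y, ⟨⟨hys, hOWA ⟨⟨hyO, hzeroW hyD⟩, hyE⟩⟩, hyH⟩⟩
          · have hsN : Ustar.IsOpen (s ∩ N) := Ustar.isOpen_inter _ _ hs hNopen
            obtain ⟨y, ⟨hys, hyN⟩, hyH⟩ :=
              hGood.2.2.2 H hH hHd (s ∩ N) hsN ⟨x₀, hx₀s, hx₀⟩
            exact ⟨y, ⟨hys, hNA hyN⟩, hyH⟩
      have hAopen : Ustar.IsOpen A :=
        hmax (expandT Ustar A) hAgood (fun s hs => isOpen_expandT_of hs) A
          (isOpen_expandT_self _ _)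
      -- but A open gives a contradiction with density of E j
      have hOA : Ustar.IsOpen (O ∩ A) := Ustar.isOpen_inter _ _ hO hAopen
      have hOAne : (O ∩ A).Nonempty := by
        obtain ⟨y, ⟨hyD, hyO⟩, hyE⟩ := hplus 0 (by simp [hn0]) O hO subset_rfl hOne
        exact ⟨y, hyO, hOWA ⟨⟨hyO, hzeroW hyD⟩, hyE⟩⟩
      obtain ⟨z, ⟨hzO, hzA⟩, hzE⟩ := hEdense j (O ∩ A) hOA hOAne
      rcases hzA with hz | hz
      · exact hz.2 hzE
      · exact (eq_empty_iff_forall_notMem.mp hNO z) ⟨hz, hzO⟩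
    -- Phase 2 : the matrix of opens
    set G : Fin n → Fin (n + 1) → Set X :=
      fun i' j => ⋃₀ {O | Ustar.IsOpen O ∧ D i'.castSucc ∩ O ⊆ E j} with hGdef
    have hGopen : ∀ i' j, Ustar.IsOpen (G i' j) :=
      fun i' j => Ustar.isOpen_sUnion _ fun t ht => ht.1
    have hGsub : ∀ i' j, D i'.castSucc ∩ G i' j ⊆ E j := by
      rintro i' j x ⟨hxD, O₁, hO₁, hxO₁⟩
      exact hO₁.2 ⟨hxD, hxO₁⟩
    have hGdisj : ∀ i' j j', j ≠ j' → G i' j ∩ G i' j' = ∅ := by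
      intro i' j j' hne'
      rw [eq_empty_iff_forall_notMem]
      rintro x ⟨hx1, hx2⟩
      obtain ⟨O₁, hO₁, hxO₁⟩ := hx1
      obtain ⟨O₂, hO₂, hxO₂⟩ := hx2
      have hop : Ustar.IsOpen (O₁ ∩ O₂) := Ustar.isOpen_inter _ _ hO₁.1 hO₂.1
      obtain ⟨y, ⟨hyO₁, hyO₂⟩, hyD⟩ :=
        hGood.2.1 i'.castSucc (by simp) (O₁ ∩ O₂) hop ⟨x, hxO₁, hxO₂⟩
      exact Set.disjoint_left.mp (hEdisj hne') (hO₁.2 ⟨hyD, hyO₁⟩) (hO₂.2 ⟨hyD, hyO₂⟩)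
    refine config_ind Ustar G hGopen hGdisj n Finset.univ Finset.univ ?_ ?_
      univ Ustar.isOpen_univ hXne ?_
    · simp
    · simp
    · intro j _ O' hO' hsub hO'ne
      obtain ⟨i, hi, O'', hO'', hsub'', hne'', hsubE⟩ := claim1 O' hO' hO'ne j
      have e : (⟨(i : ℕ), hi⟩ : Fin n).castSucc = i := Fin.ext rfl
      have hmem : O'' ∈ {O | Ustar.IsOpen O ∧ D (⟨(i : ℕ), hi⟩ : Fin n).castSucc ∩ O ⊆ E j} :=
        ⟨hO'', by rw [e]; exact hsubE⟩
      obtain ⟨x, hx⟩ := hne''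
      exact ⟨⟨(i : ℕ), hi⟩, Finset.mem_univ _,
        ⟨x, subset_sUnion_of_mem hmem hx, hsub'' hx⟩⟩
  · -- not quasi-regular
    intro hQR
    obtain ⟨V, hVopen, hVne, hclV⟩ := hQR W hWopen hWne
    set Hs : Set X := ⋃₀ {G | T.IsOpen G ∧ G ∩ V = ∅} with hHdef
    have hHopen : T.IsOpen Hs := T.isOpen_sUnion _ fun t ht => ht.1
    have hHV : Hs ∩ V = ∅ := by
      rw [eq_empty_iff_forall_notMem]
      rintro x ⟨⟨G', hG', hxG'⟩, hxV⟩
      exact (eq_empty_iff_forall_notMem.mp hG'.2 x) ⟨hxG', hxV⟩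
    have hlastW : ∀ x ∈ D (Fin.last n), x ∉ W := by
      intro x hx hxW
      obtain ⟨i', hi'⟩ := mem_iUnion.mp hxW
      have hne' : Fin.last n ≠ i'.castSucc := by
        intro h
        have h2 := congrArg Fin.val h
        have h3 := i'.isLt
        simp [Fin.val_last, Fin.coe_castSucc] at h2
        omega
      exact Set.disjoint_left.mp (hDdisj hne') hx hi'
    have hDnH : D (Fin.last n) ⊆ Hs := by
      intro x hx
      have hxW : x ∉ W := hlastW x hx
      have hxnc : x ∉ @closure X Ustar V := fun hc => hxW (hclV hc)
      obtain ⟨s, hs, hxs, hsV⟩ := not_mem_closure hxnc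
      obtain ⟨G', hG', hxG', hGs⟩ := hGood.2.2.1 x hxW s hs hxs
      refine mem_sUnion.mpr ⟨G', ⟨hG', ?_⟩, hxG'⟩
      rw [eq_empty_iff_forall_notMem]
      rintro y ⟨hyG, hyV⟩
      exact (eq_empty_iff_forall_notMem.mp hsV y) ⟨hGs hyG, hyV⟩
    have hHdense : ∀ s, T.IsOpen s → s.Nonempty → (s ∩ Hs).Nonempty := by
      intro s hs hne
      obtain ⟨y, hy1, hy2⟩ := hDdense (Fin.last n) s hs hne
      exact ⟨y, hy1, hDnH hy2⟩
    obtain ⟨z, hz⟩ := hGood.2.2.2 Hs hHopen hHdense V hVopen hVne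
    exact (eq_empty_iff_forall_notMem.mp hHV z) ⟨hz.2, hz.1⟩
end

section
/- Let 1 < n < m < 2n < ω and let (X, T) be an n-maximal, m-resolvable space that is hereditarily (m+1)-irresolvable. Then no expansion U ⊇ T makes (X, U) both exactly n-resolvable and quasi-regular. -/
/-!
Let `D` partition `X` into `n` `U`-dense sets and let `E` be an `m`-resolution of `(X, T)`.
By `n`-maximality every nonempty `U`-open set is `T`-somewhere dense. As `(X, U)` is not
`(n+1)`-resolvable, a maximal disjoint family of `(n+1)`-resolvable subspaces leaves a nonempty
`U`-open `G` containing none. Inside `int_T cl_T G` there are a `T`-open `H` and `φ : m → n` with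
every `D (φ j) ∩ E j` `T`-dense in `H`, and since `m < 2n` some `i₀` has at most one
`φ`-preimage.

If some nonempty `U`-open `V` with `cl_U V ⊆ G ∩ H` has `cl_U V` of empty `T`-interior, splitting
`D i₀` into its parts in `V` and in `H \ cl_U V` gives `m + 1` disjoint sets, all `T`-dense in
`int_T cl_T V ∩ H`, against hereditary `(m+1)`-irresolvability. Otherwise quasi-regularity puts a
nonempty `T`-open set inside every nonempty `U`-open subset of `G ∩ H`, so the `E j` are
`U`-dense there and `G ∩ H` is `m`-, hence `(n+1)`-resolvable in `U`.
-/

open Set TopologicalSpace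

variable {X : Type*}

open Function Topology

section

variable {t u : TopologicalSpace X} {ι κ : Type*} {S : Set X}

theorem ResolvableFam.nonempty [Nonempty ι] (h : ResolvableFam t S ι) : S.Nonempty :=
  let ⟨_, hsub, hne, _, _⟩ := h
  (hne (Classical.arbitrary ι)).mono (hsub _)

theorem ResolvableFam.of_embedding (h : ResolvableFam t S ι) (f : κ ↪ ι) :
    ResolvableFam t S κ :=
  let ⟨D, hsub, hne, hdense, hdisj⟩ := h
  ⟨D ∘ f, fun _ => hsub _, fun _ => hne _, fun _ => hdense _, hdisj.comp_of_injective f.injective⟩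

theorem ResolvableFam.of_le (h : ResolvableFam u S ι) (hut : u ≤ t) : ResolvableFam t S ι :=
  let ⟨D, hsub, hne, hdense, hdisj⟩ := h
  ⟨D, hsub, hne, fun i => (hdense i).trans (closure.mono hut), hdisj⟩

end

section OneTopology

variable [t : TopologicalSpace X] {ι κ : Type*}

theorem ResolvableFam.of_subset_closure {S S' : Set X} (h : ResolvableFam t S ι)
    (hSS' : S ⊆ S') (hS' : S' ⊆ closure S) : ResolvableFam t S' ι :=
  let ⟨D, hsub, hne, hdense, hdisj⟩ := h
  ⟨D, fun i => (hsub i).trans hSS', hne,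
    fun i => hS'.trans (closure_minimal (hdense i) isClosed_closure), hdisj⟩

theorem resolvableFam_of_subset_closure {O : Set X} (hO : IsOpen O) (hne : O.Nonempty)
    {D : ι → Set X} (hD : ∀ i, O ⊆ closure (D i)) (hdisj : Pairwise (Disjoint on D)) :
    ResolvableFam t O ι := by
  have hdense : ∀ i, O ⊆ closure (D i ∩ O) := fun i x hx => by
    rw [inter_comm]
    exact hO.inter_closure ⟨hx, hD i hx⟩
  refine ⟨fun i => D i ∩ O, fun i => inter_subset_right, fun i => ?_, hdense,
    fun i j hij => (hdisj hij).mono inter_subset_left inter_subset_left⟩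
  exact closure_nonempty_iff.1 (hne.mono (hdense i))

theorem resolvableFam_sUnion {F : Set (Set X)} (hF : F.PairwiseDisjoint id) (hne : F.Nonempty)
    (h : ∀ Z ∈ F, ResolvableFam t Z ι) : ResolvableFam t (⋃₀ F) ι := by
  choose! d hsub hdne hdense hdisj using h
  obtain ⟨Z₀, hZ₀⟩ := hne
  refine ⟨fun i => ⋃ Z ∈ F, d Z i, fun i => iUnion₂_subset fun Z hZ => (hsub Z hZ i).trans
    (subset_sUnion_of_mem hZ), fun i => (hdne Z₀ hZ₀ i).mono (subset_biUnion_of_mem hZ₀),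
    fun i => sUnion_subset fun Z hZ => (hdense Z hZ i).trans
      (closure_mono (subset_biUnion_of_mem (u := fun Z => d Z i) hZ)), ?_⟩
  intro i j hij
  simp only [disjoint_iUnion_left, disjoint_iUnion_right]
  intro Z hZ Z' hZ'
  rcases eq_or_ne Z' Z with rfl | hZZ'
  · exact hdisj Z' hZ' hij
  · exact (hF hZ' hZ hZZ').mono (hsub Z' hZ' i) (hsub Z hZ j)

theorem exists_isOpen_forall_not_resolvableFam [Nonempty X] [Nonempty ι]
    (h : ¬ ResolvableFam t univ ι) :
    ∃ G : Set X, IsOpen G ∧ G.Nonempty ∧ ∀ Z ⊆ G, ¬ ResolvableFam t Z ι := by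
  obtain ⟨F, hF⟩ := zorn_subset {F : Set (Set X) | F.PairwiseDisjoint id ∧
      ∀ Z ∈ F, ResolvableFam t Z ι} fun c hc hchain =>
    ⟨⋃₀ c, ⟨(hchain.pairwiseDisjoint_sUnion id).2 fun F hF => (hc hF).1,
      fun _ ⟨F, hF, hZ⟩ => (hc hF).2 _ hZ⟩, fun _ => subset_sUnion_of_mem⟩
  have hFZ : ∀ Z ∈ F, Z ⊆ closure (⋃₀ F) := fun Z hZ =>
    (subset_sUnion_of_mem hZ).trans subset_closure
  refine ⟨(closure (⋃₀ F))ᶜ, isClosed_closure.isOpen_compl, ?_, fun Z hZ hZres => ?_⟩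
  · refine nonempty_compl.2 fun hdense => h ?_
    obtain ⟨Z₀, hZ₀, -⟩ := nonempty_sUnion.1 <| closure_nonempty_iff.1 <| hdense ▸ univ_nonempty
    exact (resolvableFam_sUnion hF.prop.1 ⟨Z₀, hZ₀⟩ hF.prop.2).of_subset_closure
      (subset_univ _) hdense.ge
  · have hdisj : ∀ W ∈ F, Disjoint Z W := fun W hW =>
      (disjoint_compl_left_iff_subset.2 (hFZ W hW)).mono_left hZ
    have hZF : Z ∈ F := hF.mem_of_prop_insert ⟨hF.prop.1.insert fun W hW _ => hdisj W hW,
      forall_insert_of_forall hF.prop.2 hZres⟩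
    obtain ⟨x, hx⟩ := hZres.nonempty
    exact hZ hx (hFZ Z hZF hx)

theorem ResolvableFam.exists_iUnion_eq_univ [Nonempty ι] (h : ResolvableFam t univ ι) :
    ∃ D : ι → Set X, ⋃ i, D i = univ ∧ (∀ i, univ ⊆ closure (D i)) ∧
      Pairwise (Disjoint on D) := by
  classical
  obtain ⟨D, -, -, hdense, hdisj⟩ := h
  obtain ⟨i₀⟩ := ‹Nonempty ι›
  -- the points missed by `D` are added to `D i₀`
  set D' : ι → Set X := update D i₀ (⋃ j ≠ i₀, D j)ᶜ
  have hDD' : ∀ i, D i ⊆ D' i := by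
    intro i
    rcases eq_or_ne i i₀ with rfl | hi
    · simpa [D', subset_compl_iff_disjoint_right] using fun j hj => (hdisj hj).symm
    · simp [D', hi]
  refine ⟨D', eq_univ_of_forall fun x => ?_, fun i => (hdense i).trans (closure_mono (hDD' i)),
    fun i j hij => ?_⟩
  · by_cases hx : ∃ j ≠ i₀, x ∈ D j
    · obtain ⟨j, -, hx⟩ := hx
      exact mem_iUnion.2 ⟨j, hDD' j hx⟩
    · exact mem_iUnion.2 ⟨i₀, by simpa [D'] using hx⟩
  · change Disjoint (D' i) (D' j)
    rcases eq_or_ne i i₀ with rfl | hi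
    · simp only [D', update_self, update_of_ne hij.symm]
      exact disjoint_compl_left_iff_subset.2 (subset_iUnion₂ (s := fun j _ => D j) j hij.symm)
    rcases eq_or_ne j i₀ with rfl | hj
    · simp only [D', update_self, update_of_ne hi]
      exact disjoint_compl_right_iff_subset.2 (subset_iUnion₂ (s := fun i _ => D i) i hi)
    · simpa [D', hi, hj] using hdisj hij

theorem IsOpen.exists_inter_interior_closure_nonempty {O : Set X} (hO : IsOpen O)
    (hne : O.Nonempty) (s : Finset ι) {A : ι → Set X} (hcov : O ⊆ ⋃ i ∈ s, closure (A i)) :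
    ∃ i ∈ s, (O ∩ interior (closure (A i))).Nonempty := by
  classical
  induction s using Finset.induction_on with
  | empty => simp [Set.subset_empty_iff, hne.ne_empty] at hcov
  | @insert a s _ ih =>
    by_cases hs : O ⊆ ⋃ i ∈ s, closure (A i)
    · obtain ⟨i, hi, hOi⟩ := ih hs
      exact ⟨i, Finset.mem_insert_of_mem hi, hOi⟩
    · -- what `s` leaves uncovered is an open set inside `closure (A a)`
      obtain ⟨x, hxO, hxs⟩ := not_subset.1 hs
      have hsub : O \ ⋃ i ∈ s, closure (A i) ⊆ closure (A a) := fun y ⟨hyO, hys⟩ => by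
        simpa [hys] using hcov hyO
      refine ⟨a, Finset.mem_insert_self a s, x, hxO, interior_maximal hsub
        (hO.sdiff (isClosed_biUnion_finset fun i _ => isClosed_closure)) ⟨hxO, hxs⟩⟩

theorem IsOpen.exists_inter_interior_closure_inter_nonempty [Fintype ι] {O : Set X}
    (hO : IsOpen O) (hne : O.Nonempty) {D : ι → Set X} (hD : ⋃ i, D i = univ) {E : Set X}
    (hE : O ⊆ closure E) : ∃ i, (O ∩ interior (closure (D i ∩ E))).Nonempty := by
  obtain ⟨i, -, hi⟩ := hO.exists_inter_interior_closure_nonempty hne Finset.univ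
    (A := fun i => D i ∩ E) (by simpa [← closure_iUnion_of_finite, ← iUnion_inter, hD] using hE)
  exact ⟨i, hi⟩

theorem IsOpen.exists_subset_closure_inter [Fintype ι] [Nonempty ι] [Fintype κ] {O : Set X}
    (hO : IsOpen O) (hne : O.Nonempty) {D : ι → Set X} (hD : ⋃ i, D i = univ)
    {E : κ → Set X} (hE : ∀ j, univ ⊆ closure (E j)) :
    ∃ H ⊆ O, IsOpen H ∧ H.Nonempty ∧ ∃ φ : κ → ι, ∀ j, H ⊆ closure (D (φ j) ∩ E j) := by
  classical
  suffices ∀ s : Finset κ, ∃ H ⊆ O, IsOpen H ∧ H.Nonempty ∧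
      ∃ φ : κ → ι, ∀ j ∈ s, H ⊆ closure (D (φ j) ∩ E j) by
    obtain ⟨H, hHO, hH, hHne, φ, hφ⟩ := this Finset.univ
    exact ⟨H, hHO, hH, hHne, φ, fun j => hφ j (Finset.mem_univ j)⟩
  intro s
  induction s using Finset.induction_on with
  | empty => exact ⟨O, subset_rfl, hO, hne, fun _ => Classical.arbitrary ι, by simp⟩
  | @insert j s hj ih =>
    obtain ⟨H, hHO, hH, hHne, φ, hφ⟩ := ih
    obtain ⟨i, hi⟩ := hH.exists_inter_interior_closure_inter_nonempty hHne hD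
      ((subset_univ H).trans (hE j))
    refine ⟨H ∩ interior (closure (D i ∩ E j)), inter_subset_left.trans hHO,
      hH.inter isOpen_interior, hi, update φ j i, fun j' hj' => ?_⟩
    rcases Finset.mem_insert.1 hj' with rfl | hj's
    · simpa using inter_subset_right.trans interior_subset
    · rw [update_of_ne (ne_of_mem_of_not_mem hj's hj)]
      exact inter_subset_left.trans (hφ j' hj's)

end OneTopology

theorem Fintype.exists_fiber_subsingleton {α β : Type*} [Fintype α] [Fintype β] (f : α → β)
    (h : Fintype.card α < 2 * Fintype.card β) : ∃ b, (f ⁻¹' {b}).Subsingleton := by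
  classical
  obtain ⟨b, hb⟩ := Fintype.exists_card_fiber_lt_of_card_lt_mul (f := f) (n := 2)
    (by rwa [mul_comm])
  exact ⟨b, fun x hx y hy => Finset.card_le_one.1 (Nat.le_of_lt_succ hb) x (by simpa using hx) y
    (by simpa using hy)⟩

section TwoTopologies

variable {u : TopologicalSpace X} [t : TopologicalSpace X] {ι κ : Type*}

theorem closure_subset_closure_inter_of_le (hut : u ≤ t) {D W : Set X}
    (hD : univ ⊆ closure[u] D) (hW : IsOpen[u] W) : closure W ⊆ closure (D ∩ W) := by
  refine closure_minimal (fun x hx => closure.mono hut ?_) isClosed_closure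
  rw [inter_comm]
  exact @IsOpen.inter_closure X u W D hW x ⟨hx, hD trivial⟩

theorem nonempty_interior_closure_of_isOpen_of_le (hut : u ≤ t)
    (hmax : ∀ A : Set X, A.Nonempty → interior (closure A) = ∅ → ¬ ResolvableFam t A ι)
    {D : ι → Set X} (hD : ∀ i, univ ⊆ closure[u] (D i)) (hdisj : Pairwise (Disjoint on D))
    {V : Set X} (hV : IsOpen[u] V) (hne : V.Nonempty) : (interior (closure V)).Nonempty :=
  nonempty_iff_ne_empty.2 fun h => hmax V hne h <|
    (resolvableFam_of_subset_closure (t := u) hV hne (fun i => (subset_univ V).trans (hD i))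
      hdisj).of_le hut

theorem QuasiRegular.subset_closure_of_dense (hqr : QuasiRegular u) {Y : Set X}
    (hY : IsOpen[u] Y)
    (hYsd : ∀ V, IsOpen[u] V → V.Nonempty → closure[u] V ⊆ Y → (interior (closure[u] V)).Nonempty)
    {E : Set X} (hE : univ ⊆ closure E) : Y ⊆ closure[u] E := by
  intro x hx
  refine (@mem_closure_iff _ u _ _).2 fun O hO hxO => ?_
  obtain ⟨V, hV, hVne, hVOY⟩ := hqr (O ∩ Y) (u.isOpen_inter _ _ hO hY) ⟨x, hxO, hx⟩
  obtain ⟨y, hyV, hyE⟩ := Dense.inter_open_nonempty (fun x => hE (mem_univ x)) _ isOpen_interior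
    (hYsd V hV hVne (hVOY.trans inter_subset_right))
  exact ⟨y, (hVOY (interior_subset hyV)).1, hyE⟩

theorem resolvableFam_option_of_le (hut : u ≤ t) {D : ι → Set X}
    (hD : ∀ i, univ ⊆ closure[u] (D i)) (hDdisj : Pairwise (Disjoint on D)) {E : κ → Set X}
    (hEdisj : Pairwise (Disjoint on E)) {H : Set X} (hH : IsOpen H) {φ : κ → ι}
    (hφ : ∀ j, H ⊆ closure (D (φ j) ∩ E j)) {i₀ : ι} (hi₀ : (φ ⁻¹' {i₀}).Subsingleton)
    {V : Set X} (hV : IsOpen[u] V) (hVH : V ⊆ H) (hVsd : (interior (closure V)).Nonempty)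
    (hVnd : interior (closure[u] V) = ∅) :
    ResolvableFam t (interior (closure V) ∩ H) (Option κ) := by
  classical
  set C := closure[u] V
  have hHC : IsOpen[u] (H \ C) := @IsOpen.sdiff X H C u (hut _ hH) (@isClosed_closure X u V)
  let ψ : Option κ → ι := fun k => k.elim i₀ φ
  let W : Option κ → Set X := fun k => k.elim (H \ C) fun j => if φ j = i₀ then V else E j
  have hAne : (interior (closure V) ∩ H).Nonempty :=
    let ⟨x, hx⟩ := hVsd
    (mem_closure_iff.1 (interior_subset hx) _ isOpen_interior hx).mono
      (inter_subset_inter_right _ hVH)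
  refine resolvableFam_of_subset_closure (isOpen_interior.inter hH) hAne
    (D := fun k => D (ψ k) ∩ W k) (fun k => ?_) fun k k' hkk' => ?_
  · rcases k with _ | j
    · calc interior (closure V) ∩ H ⊆ H := inter_subset_right
        _ ⊆ closure (H ∩ Cᶜ) :=
          (interior_eq_empty_iff_dense_compl.1 hVnd).open_subset_closure_inter hH
        _ ⊆ closure (D i₀ ∩ (H \ C)) := closure_subset_closure_inter_of_le hut (hD i₀) hHC
    · by_cases hj : φ j = i₀
      · simpa [ψ, W, hj] using inter_subset_left.trans
          (interior_subset.trans (closure_subset_closure_inter_of_le hut (hD i₀) hV))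
      · simpa [ψ, W, hj] using inter_subset_right.trans (hφ j)
  · change Disjoint (D (ψ k) ∩ W k) (D (ψ k') ∩ W k')
    by_cases hψ : ψ k = ψ k'
    · refine (?_ : Disjoint (W k) (W k')).mono inter_subset_right inter_subset_right
      have hCV : Disjoint (H \ C) V := disjoint_sdiff_left.mono_right (@subset_closure X u V)
      rcases k with _ | j <;> rcases k' with _ | j'
      · exact absurd rfl hkk'
      · simpa [W, show φ j' = i₀ from hψ.symm] using hCV
      · simpa [W, show φ j = i₀ from hψ] using hCV.symm
      · have hjj' : j ≠ j' := fun h => hkk' (congrArg some h)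
        have hφj : φ j ≠ i₀ := fun hj => hjj' (hi₀ hj (hψ.symm.trans hj))
        have hφj' : φ j' ≠ i₀ := fun hj' => hφj ((hψ : φ j = φ j').trans hj')
        simpa [W, hφj, hφj'] using hEdisj hjj'
    · exact (hDdisj hψ).mono inter_subset_left inter_subset_left

end TwoTopologies

theorem stmt10_general [T : TopologicalSpace X] (n m : ℕ) (h2 : n < m)
    (h3 : m < 2 * n)
    (hmax : ∀ A : Set X, A.Nonempty → interior (closure A) = ∅ →
      ¬ ResolvableFam T A (Fin n))
    (hres : ResolvableFam T (univ : Set X) (Fin m))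
    (hirr : ∀ A : Set X, A.Nonempty → ¬ ResolvableFam T A (Fin (m + 1))) :
    ∀ U : TopologicalSpace X, (∀ s, T.IsOpen s → U.IsOpen s) →
      ¬ (ResolvableFam U (univ : Set X) (Fin n) ∧
         ¬ ResolvableFam U (univ : Set X) (Fin (n + 1)) ∧ QuasiRegular U) := by
  rintro U hUT ⟨hUres, hUirr, hqr⟩
  replace hUT : U ≤ T := hUT
  -- otherwise `U`, introduced last, would be the instance behind unannotated `closure`/`interior`
  let _ : TopologicalSpace X := T
  have : NeZero n := ⟨by omega⟩
  have : NeZero m := ⟨by omega⟩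
  have : Nonempty X := ⟨hres.nonempty.some⟩
  obtain ⟨D, hDcov, hD, hDdisj⟩ := hUres.exists_iUnion_eq_univ (t := U)
  obtain ⟨E, -, -, hE, hEdisj⟩ := hres
  obtain ⟨G, hG, hGne, hGirr⟩ := exists_isOpen_forall_not_resolvableFam (t := U) hUirr
  have hsd {V : Set X} := nonempty_interior_closure_of_isOpen_of_le (V := V) hUT hmax hD hDdisj
  obtain ⟨H, hHG, hH, hHne, φ, hφ⟩ :=
    isOpen_interior.exists_subset_closure_inter (hsd hG hGne) hDcov hE
  obtain ⟨i₀, hi₀⟩ := Fintype.exists_fiber_subsingleton φ (by simpa using h3)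
  have hY : IsOpen[U] (G ∩ H) := U.isOpen_inter _ _ hG (hUT _ hH)
  by_cases hYsd : ∀ V, IsOpen[U] V → V.Nonempty → closure[U] V ⊆ G ∩ H →
      (interior (closure[U] V)).Nonempty
  · have hYne : (G ∩ H).Nonempty :=
      let ⟨x, hx⟩ := hHne
      (closure_inter_open_nonempty_iff hH).1 ⟨x, interior_subset (hHG hx), hx⟩
    exact hGirr _ inter_subset_left <| (resolvableFam_of_subset_closure (t := U) hY hYne
      (fun j => hqr.subset_closure_of_dense hY hYsd (hE j)) hEdisj).of_embedding
        (Fin.castLEEmb h2)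
  · push Not at hYsd
    obtain ⟨V, hV, hVne, hVY, hVnd⟩ := hYsd
    have hA := (resolvableFam_option_of_le hUT hD hDdisj hEdisj hH hφ hi₀ hV
      ((@subset_closure X U V).trans (hVY.trans inter_subset_right)) (hsd hV hVne)
      hVnd).of_embedding (finSuccEquiv m).toEmbedding
    exact hirr _ hA.nonempty hA

theorem stmt10 [T : TopologicalSpace X] (n m : ℕ) (h1 : 1 < n) (h2 : n < m)
    (h3 : m < 2 * n)
    (hmax : ∀ A : Set X, A.Nonempty → interior (closure A) = ∅ →
      ¬ ResolvableFam T A (Fin n))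
    (hres : ResolvableFam T (univ : Set X) (Fin m))
    (hirr : ∀ A : Set X, A.Nonempty → ¬ ResolvableFam T A (Fin (m + 1))) :
    ∀ U : TopologicalSpace X, (∀ s, T.IsOpen s → U.IsOpen s) →
      ¬ (ResolvableFam U (univ : Set X) (Fin n) ∧
         ¬ ResolvableFam U (univ : Set X) (Fin (n + 1)) ∧ QuasiRegular U) :=
  stmt10_general (T := T) n m h2 h3 hmax hres hirr
end

section
/- Let 1 < n < ω and let X be a T1 space that is the union of n+1 pairwise disjoint dense submaximal subspaces D_0, ..., D_n. Then X is 2-maximal: no nonempty nowhere dense subspace of X is resolvable. -/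
/-!
Every nonempty nowhere dense set `A` has an isolated point, which no resolvable space can have.
A nowhere dense subset of a dense submaximal subspace `D` is discrete: removing all of it but one
point from `D` leaves a dense subset of `D`, which is then open in `D`. Now `A` is covered by the
finitely many closed sets `closure (A ∩ D i)`, so one of them contains a nonempty relatively open
piece `U ∩ A`; an isolating neighbourhood of a point of `A ∩ D i` in `U` isolates it in `A` too.
-/

open Set TopologicalSpace

variable {X : Type*}

section

variable [TopologicalSpace X]

def IsSubmaximal (D : Set X) : Prop :=
  ∀ A ⊆ D, D ⊆ closure A → ∃ U, IsOpen U ∧ A = U ∩ D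

theorem exists_isOpen_inter_subset_of_finite_closed_cover {ι : Type*} [Finite ι] {A : Set X}
    (hA : A.Nonempty) {F : ι → Set X} (hF : ∀ i, IsClosed (F i)) (hcover : A ⊆ ⋃ i, F i) :
    ∃ i U, IsOpen U ∧ (U ∩ A).Nonempty ∧ U ∩ A ⊆ F i := by
  by_contra! h
  have : Nonempty A := hA.to_subtype
  let G : ι → Set A := fun i => (Subtype.val ⁻¹' F i)ᶜ
  have hG_open : ∀ i, IsOpen (G i) := fun i => ((hF i).preimage continuous_subtype_val).isOpen_compl
  have hG_dense : ∀ i, Dense (G i) := by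
    intro i
    refine dense_iff_inter_open.mpr fun V hV ⟨a, ha⟩ => ?_
    obtain ⟨U, hU, rfl⟩ := isOpen_induced_iff.mp hV
    obtain ⟨z, ⟨hzU, hzA⟩, hzF⟩ := not_subset.mp (h i U hU ⟨a, ha, a.2⟩)
    exact ⟨⟨z, hzA⟩, hzU, hzF⟩
  have hdense : Dense (⋂₀ range G) :=
    (finite_range G).dense_sInter (forall_mem_range.mpr hG_open) (forall_mem_range.mpr hG_dense)
  obtain ⟨a, ha⟩ := hdense.nonempty
  obtain ⟨i, hi⟩ := mem_iUnion.mp (hcover a.2)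
  exact mem_sInter.mp ha (G i) (mem_range_self i) hi

theorem IsSubmaximal.exists_isOpen_inter_eq_singleton {D N : Set X} (hD : IsSubmaximal D)
    (hD_dense : Dense D) (hND : N ⊆ D) (hN : IsNowhereDense N) {x : X} (hx : x ∈ N) :
    ∃ W, IsOpen W ∧ W ∩ N = {x} := by
  obtain ⟨hN_open, hN_dense⟩ := isClosed_isNowhereDense_iff_compl.mp ⟨isClosed_closure, hN.closure⟩
  have hdense : Dense (D \ (N \ {x})) :=
    (hD_dense.inter_of_isOpen_right hN_dense hN_open).mono fun z (hz : z ∈ D ∩ (closure N)ᶜ) =>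
      ⟨hz.1, fun hzN => hz.2 (subset_closure hzN.1)⟩
  obtain ⟨W, hW, hWD⟩ := hD _ sdiff_subset (hdense.closure_eq ▸ subset_univ D)
  refine ⟨W, hW, Subset.antisymm (fun z ⟨hzW, hzN⟩ => ?_) ?_⟩
  · have hz : z ∈ D \ (N \ {x}) := hWD ▸ ⟨hzW, hND hzN⟩
    by_contra hzx
    exact hz.2 ⟨hzN, hzx⟩
  · have hxW : x ∈ W ∩ D := hWD ▸ ⟨hND hx, fun h => h.2 rfl⟩
    exact singleton_subset_iff.mpr ⟨hxW.1, hx⟩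

theorem exists_isOpen_inter_eq_singleton_of_iUnion_isSubmaximal [T1Space X] {ι : Type*} [Finite ι]
    {D : ι → Set X} (hD : ∀ i, IsSubmaximal (D i)) (hD_dense : ∀ i, Dense (D i))
    (hcover : ⋃ i, D i = univ) {A : Set X} (hA : A.Nonempty) (hA_nwd : IsNowhereDense A) :
    ∃ x V, IsOpen V ∧ V ∩ A = {x} := by
  have hA_cover : A ⊆ ⋃ i, closure (A ∩ D i) := fun y hy =>
    have ⟨i, hi⟩ := iUnion_eq_univ_iff.mp hcover y
    mem_iUnion.mpr ⟨i, subset_closure ⟨hy, hi⟩⟩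
  obtain ⟨i, U, hU, ⟨y, hyU, hyA⟩, hUA⟩ :=
    exists_isOpen_inter_subset_of_finite_closed_cover hA (fun _ => isClosed_closure) hA_cover
  obtain ⟨x, hxU, hxAD⟩ := mem_closure_iff.mp (hUA ⟨hyU, hyA⟩) U hU hyU
  obtain ⟨W, hW, hWx⟩ := (hD i).exists_isOpen_inter_eq_singleton (hD_dense i) inter_subset_right
    (hA_nwd.mono inter_subset_left) hxAD
  refine ⟨x, U ∩ W, hU.inter hW, Subset.antisymm (fun z ⟨⟨hzU, hzW⟩, hzA⟩ => ?_) ?_⟩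
  · have : z ∈ closure (W ∩ (A ∩ D i)) := hW.inter_closure ⟨hzW, hUA ⟨hzU, hzA⟩⟩
    rwa [hWx, closure_singleton] at this
  · have hxW : x ∈ W ∩ (A ∩ D i) := hWx ▸ mem_singleton x
    exact singleton_subset_iff.mpr ⟨⟨hxU, hxW.1⟩, hxAD.1⟩

theorem not_resolvableFam_of_isOpen_inter_eq_singleton {ι : Type*} [Nontrivial ι] {A U : Set X}
    {x : X} (hU : IsOpen U) (hUA : U ∩ A = {x}) : ¬ ResolvableFam ‹_› A ι := by
  rintro ⟨B, hBA, -, hB_dense, hB_disj⟩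
  have hx : x ∈ U ∩ A := hUA ▸ mem_singleton x
  have hxB : ∀ i, x ∈ B i := fun i => by
    obtain ⟨z, hzU, hzB⟩ := mem_closure_iff.mp (hB_dense i hx.2) U hU hx.1
    have hz : z ∈ U ∩ A := ⟨hzU, hBA i hzB⟩
    rw [hUA, mem_singleton_iff] at hz
    rwa [← hz]
  obtain ⟨i, j, hij⟩ := exists_pair_ne ι
  exact (hB_disj hij).ne_of_mem (hxB i) (hxB j) rfl

end

theorem stmt11_general [T : TopologicalSpace X] [T1Space X] (n : ℕ)
    (D : Fin (n + 1) → Set X)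
    (hdense : ∀ i, Dense (D i))
    (hsub : ∀ i, ∀ A ⊆ D i, D i ⊆ closure A → ∃ U, IsOpen U ∧ A = U ∩ D i)
    (hcover : (⋃ i, D i) = univ) :
    ∀ A : Set X, A.Nonempty → interior (closure A) = ∅ →
      ¬ ResolvableFam T A (Fin 2) := by
  intro A hA hA_nwd
  obtain ⟨x, V, hV, hVA⟩ :=
    exists_isOpen_inter_eq_singleton_of_iUnion_isSubmaximal hsub hdense hcover hA hA_nwd
  exact not_resolvableFam_of_isOpen_inter_eq_singleton hV hVA

theorem stmt11 [T : TopologicalSpace X] [T1Space X] (n : ℕ) (hn : 1 < n)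
    (D : Fin (n + 1) → Set X)
    (hdisj : Pairwise fun i j => Disjoint (D i) (D j))
    (hdense : ∀ i, Dense (D i))
    (hsub : ∀ i, ∀ A ⊆ D i, D i ⊆ closure A → ∃ U, IsOpen U ∧ A = U ∩ D i)
    (hcover : (⋃ i, D i) = univ) :
    ∀ A : Set X, A.Nonempty → interior (closure A) = ∅ →
      ¬ ResolvableFam T A (Fin 2) :=
  stmt11_general (T := T) n D hdense hsub hcover
end

section
/- Let 1 < n < ω and let X be a T1 space that is the union of n+1 pairwise disjoint dense submaximal subspaces. Then X is hereditarily (n+2)-irresolvable: no nonempty subspace of X admits n+2 pairwise disjoint dense subsets. -/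
open Set TopologicalSpace

variable {X : Type*}

lemma cover_lemma [TopologicalSpace X] {m : ℕ} (C : Fin m → Set X)
    (hC : ∀ i, IsClosed (C i)) :
    ∀ (s : Finset (Fin m)) (B : Set X), B.Nonempty → B ⊆ ⋃ i ∈ s, C i →
      ∃ i ∈ s, ∃ W, IsOpen W ∧ (W ∩ B).Nonempty ∧ W ∩ B ⊆ C i := by
  intro s
  induction s using Finset.induction with
  | empty => intro B hB hcov; rcases hB with ⟨x, hx⟩; simpa using hcov hx
  | @insert a s ha ih =>
    intro B hB hcov
    by_cases hBC : (B \ C a).Nonempty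
    · have hcov' : B \ C a ⊆ ⋃ i ∈ s, C i := by
        intro x hx
        have := hcov hx.1
        simp only [Finset.mem_insert, mem_iUnion] at this ⊢
        rcases this with ⟨i, hi | hi, hxi⟩
        · exact absurd (hi ▸ hxi) hx.2
        · exact ⟨i, hi, hxi⟩
      obtain ⟨i, hi, W, hW, hWne, hWsub⟩ := ih (B \ C a) hBC hcov'
      refine ⟨i, Finset.mem_insert_of_mem hi, W ∩ (C a)ᶜ, hW.inter (hC a).isOpen_compl, ?_, ?_⟩
      · rcases hWne with ⟨x, hxW, hxB, hxC⟩; exact ⟨x, ⟨hxW, hxC⟩, hxB⟩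
      · rintro x ⟨⟨hxW, hxC⟩, hxB⟩; exact hWsub ⟨hxW, hxB, hxC⟩
    · refine ⟨a, Finset.mem_insert_self a s, univ, isOpen_univ, by simpa using hB, ?_⟩
      intro x hx
      by_contra hxa
      exact hBC ⟨x, hx.2, hxa⟩

theorem stmt12 [T : TopologicalSpace X] [T1Space X] (n : ℕ) (hn : 1 < n)
    (D : Fin (n + 1) → Set X)
    (hdisj : Pairwise fun i j => Disjoint (D i) (D j))
    (hdense : ∀ i, Dense (D i))
    (hsub : ∀ i, ∀ A ⊆ D i, D i ⊆ closure A → ∃ U, IsOpen U ∧ A = U ∩ D i)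
    (hcover : (⋃ i, D i) = univ) :
    ∀ A : Set X, A.Nonempty → ¬ ResolvableFam T A (Fin (n + 2)) := by
  rintro A hA ⟨E, hEsub, hEne, hEdense, hEdisj⟩
  -- Main shrinking induction: build open O with O∩A nonempty and f such that for all
  -- j < k, O ∩ A ⊆ closure (E j ∩ D (f j) ∩ O).
  have key : ∀ k : ℕ, k ≤ n + 2 → ∃ O : Set X, IsOpen O ∧ (O ∩ A).Nonempty ∧
      ∃ f : Fin (n + 2) → Fin (n + 1), ∀ j : Fin (n + 2), (j : ℕ) < k →
        O ∩ A ⊆ closure (E j ∩ D (f j) ∩ O) := by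
    intro k
    induction k with
    | zero =>
      intro _
      exact ⟨univ, isOpen_univ, by simpa using hA, fun _ => ⟨0, by omega⟩,
        fun j hj => absurd hj (by omega)⟩
    | succ k ihk =>
      intro hk
      obtain ⟨O, hO, hOA, f, hf⟩ := ihk (by omega)
      set jk : Fin (n + 2) := ⟨k, by omega⟩ with hjk
      -- E jk ∩ O ∩ A is "dense" in O ∩ A; cover by closures of E jk ∩ D i ∩ O
      have hcov : O ∩ A ⊆ ⋃ i ∈ (Finset.univ : Finset (Fin (n+1))),
          closure (E jk ∩ D i ∩ O) := by
        intro x hx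
        have hx1 : x ∈ closure (E jk) := hEdense jk hx.2
        have hx2 : x ∈ closure (O ∩ E jk) := hO.inter_closure ⟨hx.1, hx1⟩
        have : O ∩ E jk ⊆ ⋃ i, E jk ∩ D i ∩ O := by
          intro y hy
          have : y ∈ ⋃ i, D i := hcover ▸ mem_univ y
          rcases mem_iUnion.mp this with ⟨i, hyi⟩
          exact mem_iUnion.mpr ⟨i, ⟨hy.2, hyi⟩, hy.1⟩
        have hx3 : x ∈ closure (⋃ i, E jk ∩ D i ∩ O) := closure_mono this hx2
        rw [closure_iUnion_of_finite] at hx3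
        simpa using hx3
      obtain ⟨i, -, W, hW, hWne, hWsub⟩ :=
        cover_lemma (fun i => closure (E jk ∩ D i ∩ O)) (fun _ => isClosed_closure)
          Finset.univ (O ∩ A) hOA hcov
      refine ⟨W ∩ O, hW.inter hO, ?_, Function.update f jk i, ?_⟩
      · rcases hWne with ⟨x, hxW, hxO, hxA⟩; exact ⟨x, ⟨hxW, hxO⟩, hxA⟩
      · intro j hj
        rcases Nat.lt_succ_iff_lt_or_eq.mp hj with hj' | hj'
        · -- old index: use hf and shrink
          have hfj : Function.update f jk i j = f j := by
            apply Function.update_of_ne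
            intro h; rw [h] at hj'; simp [hjk] at hj'
          rw [hfj]
          rintro x ⟨⟨hxW, hxO⟩, hxA⟩
          have hx : x ∈ closure (E j ∩ D (f j) ∩ O) := hf j hj' ⟨hxO, hxA⟩
          have : x ∈ closure ((W ∩ O) ∩ (E j ∩ D (f j) ∩ O)) :=
            (hW.inter hO).inter_closure ⟨⟨hxW, hxO⟩, hx⟩
          refine closure_mono ?_ this
          rintro y ⟨⟨hyW, hyO⟩, ⟨hyE, hyD⟩, -⟩
          exact ⟨⟨hyE, hyD⟩, hyW, hyO⟩
        · -- new index jk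
          have hjeq : j = jk := Fin.ext (by simpa [hjk] using hj')
          subst hjeq
          rw [Function.update_self]
          rintro x ⟨⟨hxW, hxO⟩, hxA⟩
          have hx : x ∈ closure (E jk ∩ D i ∩ O) := hWsub ⟨hxW, ⟨hxO, hxA⟩⟩
          have : x ∈ closure ((W ∩ O) ∩ (E jk ∩ D i ∩ O)) :=
            (hW.inter hO).inter_closure ⟨⟨hxW, hxO⟩, hx⟩
          refine closure_mono ?_ this
          rintro y ⟨⟨hyW, hyO⟩, ⟨hyE, hyD⟩, -⟩
          exact ⟨⟨hyE, hyD⟩, hyW, hyO⟩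
  obtain ⟨O, hO, hOA, f, hf⟩ := key (n + 2) le_rfl
  have hf' : ∀ j, O ∩ A ⊆ closure (E j ∩ D (f j) ∩ O) := fun j => hf j j.isLt
  -- pigeonhole
  have hnotinj : ¬ Function.Injective f := by
    intro hinj
    have := Fintype.card_le_of_injective f hinj
    simp at this
  rw [Function.not_injective_iff] at hnotinj
  obtain ⟨j, j', hfeq, hjj'⟩ := hnotinj
  set i := f j with hi
  set P := E j ∩ D i ∩ O with hP
  set Q := E j' ∩ D i ∩ O with hQ
  have hPQ : Disjoint P Q := by
    have := hEdisj hjj'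
    exact this.mono (fun x hx => hx.1.1) (fun x hx => hx.1.1)
  have hPdense : O ∩ A ⊆ closure P := hf' j
  have hQdense : O ∩ A ⊆ closure Q := by rw [hQ, hfeq]; exact hf' j'
  -- P' = P ∪ (D i \ closure P) is dense in D i
  set P' := P ∪ (D i \ closure P) with hP'
  have hP'sub : P' ⊆ D i := by
    rintro x (hx | hx)
    · exact hx.1.2
    · exact hx.1
  have hP'dense : D i ⊆ closure P' := by
    intro x hx
    by_cases hxc : x ∈ closure P
    · exact closure_mono subset_union_left hxc
    · exact subset_closure (Or.inr ⟨hx, hxc⟩)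
  obtain ⟨U, hU, hUeq⟩ := hsub i P' hP'sub hP'dense
  -- pick x ∈ P
  have hPne : P.Nonempty := by
    rcases hOA with ⟨x, hx⟩
    exact closure_nonempty_iff.mp ⟨x, hPdense hx⟩
  obtain ⟨x, hxP⟩ := hPne
  have hxU : x ∈ U := by
    have : x ∈ P' := Or.inl hxP
    rw [hUeq] at this; exact this.1
  have hxO : x ∈ O := hxP.2
  have hxA : x ∈ A := hEsub j hxP.1.1
  have hxclQ : x ∈ closure Q := hQdense ⟨hxO, hxA⟩
  -- U ∩ O is a nbhd of x, meets Q
  obtain ⟨y, hyUO, hyQ⟩ := mem_closure_iff.mp hxclQ (U ∩ O) (hU.inter hO) ⟨hxU, hxO⟩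
  have hyDi : y ∈ D i := hyQ.1.2
  have hyP' : y ∈ P' := by rw [hUeq]; exact ⟨hyUO.1, hyDi⟩
  have hynP : y ∉ P := fun h => hPQ.ne_of_mem h hyQ rfl
  have hynclP : y ∉ closure P := by
    rcases hyP' with h | h
    · exact absurd h hynP
    · exact h.2
  have hyclP : y ∈ closure P := hPdense ⟨hyQ.2, hEsub j' hyQ.1.1⟩
  exact hynclP hyclP
end

section
/- Let (X, T) be hereditarily (m+1)-irresolvable and let {D_i : i < m} be a dense partition of X. For each i < m let R_i be the union of all resolvable subsets of D_i. Then each R_i is nowhere dense in (D_i, T). -/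
open Set TopologicalSpace

variable {X : Type*}

/-- There is a maximal "bi-dense disjoint pair" inside any set `E`, and its closure
absorbs every 2-resolvable subset of `E`. -/
theorem exists_maximal_pair (T : TopologicalSpace X) (E : Set X) :
    ∃ A B : Set X, A ⊆ E ∧ B ⊆ E ∧ Disjoint A B ∧
      (A ∪ B ⊆ closure A) ∧ (A ∪ B ⊆ closure B) ∧
      ∀ S : Set X, S ⊆ E → ResolvableFam T S (Fin 2) → S ⊆ closure (A ∪ B) := by
  classical
  set P : Set (Set X × Set X) :=
    {p | p.1 ⊆ E ∧ p.2 ⊆ E ∧ Disjoint p.1 p.2 ∧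
      p.1 ∪ p.2 ⊆ closure p.1 ∧ p.1 ∪ p.2 ⊆ closure p.2} with hP
  have hzorn : ∃ p, Maximal (· ∈ P) p := by
    apply zorn_le₀
    intro c hc hchain
    refine ⟨(⋃ p ∈ c, p.1, ⋃ p ∈ c, p.2), ⟨?_, ?_, ?_, ?_, ?_⟩,
      fun p hp => ⟨subset_biUnion_of_mem hp, subset_biUnion_of_mem hp⟩⟩
    · simp only [iUnion_subset_iff]
      exact fun p hp => (hc hp).1
    · simp only [iUnion_subset_iff]
      exact fun p hp => (hc hp).2.1
    · simp only [disjoint_iUnion_left, disjoint_iUnion_right]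
      intro p hp q hq
      rcases hchain.total hp hq with h | h
      · exact (hc hq).2.2.1.mono_right h.2
      · exact (hc hp).2.2.1.mono_left h.1
    · rw [union_subset_iff]
      constructor <;>
      · simp only [iUnion_subset_iff]
        intro p hp
        refine le_trans ?_ (closure_mono (subset_biUnion_of_mem (u := fun p => p.1) hp))
        first
        | exact subset_union_left.trans (hc hp).2.2.2.1
        | exact subset_union_right.trans (hc hp).2.2.2.1
    · rw [union_subset_iff]
      constructor <;>
      · simp only [iUnion_subset_iff]
        intro p hp
        refine le_trans ?_ (closure_mono (subset_biUnion_of_mem (u := fun p => p.2) hp))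
        first
        | exact subset_union_left.trans (hc hp).2.2.2.2
        | exact subset_union_right.trans (hc hp).2.2.2.2
  obtain ⟨⟨A, B⟩, hmem, hmax⟩ := hzorn
  obtain ⟨hAE, hBE, hAB, hclA, hclB⟩ := hmem
  refine ⟨A, B, hAE, hBE, hAB, hclA, hclB, ?_⟩
  intro S hSE hres
  by_contra hnot
  rw [not_subset] at hnot
  obtain ⟨x, hxS, hxcl⟩ := hnot
  set V : Set X := (closure (A ∪ B))ᶜ with hV
  have hVopen : IsOpen V := isClosed_closure.isOpen_compl
  obtain ⟨F, hFS, hFne, hFdense, hFdisj⟩ := hres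
  set C : Set X := F 0 ∩ V with hC
  set G : Set X := F 1 ∩ V with hG
  have key : ∀ (s : Set X), S ⊆ closure s → S ∩ V ⊆ closure (s ∩ V) := by
    intro s hs y hy
    have : y ∈ V ∩ closure s := ⟨hy.2, hs hy.1⟩
    have := hVopen.inter_closure this
    rw [inter_comm] at this
    exact this
  have hxSV : x ∈ S ∩ V := ⟨hxS, hxcl⟩
  have hCcl : S ∩ V ⊆ closure C := by
    rw [hC]; exact key _ (hFdense 0)
  have hGcl : S ∩ V ⊆ closure G := by
    rw [hG]; exact key _ (hFdense 1)
  have hCne : C.Nonempty := by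
    have := hCcl hxSV
    rcases eq_empty_or_nonempty C with h | h
    · rw [h, closure_empty] at this; exact absurd this (notMem_empty x)
    · exact h
  -- the enlarged pair
  have hmem' : (A ∪ C, B ∪ G) ∈ P := by
    have hCS : C ⊆ S := fun y hy => hFS 0 hy.1
    have hGS : G ⊆ S := fun y hy => hFS 1 hy.1
    have hCV : C ⊆ V := fun y hy => hy.2
    have hGV : G ⊆ V := fun y hy => hy.2
    have hAcl : A ⊆ closure (A ∪ B) := subset_closure.trans (closure_mono subset_union_left)
    have hBcl : B ⊆ closure (A ∪ B) := subset_closure.trans (closure_mono subset_union_right)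
    have hdisjAV : Disjoint (closure (A ∪ B)) V := disjoint_compl_right
    refine ⟨union_subset hAE (hCS.trans hSE), union_subset hBE (hGS.trans hSE), ?_, ?_, ?_⟩
    · rw [disjoint_union_left, disjoint_union_right, disjoint_union_right]
      refine ⟨⟨hAB, (hdisjAV.mono hAcl hGV)⟩, ⟨(hdisjAV.mono hBcl hCV).symm, ?_⟩⟩
      exact (hFdisj (show (0 : Fin 2) ≠ 1 by decide)).mono (fun y hy => hy.1) (fun y hy => hy.1)
    · rintro y (hy | hy)
      · rcases hy with hy | hy
        · exact closure_mono subset_union_left (hclA (Or.inl hy))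
        · exact closure_mono subset_union_right (hCcl ⟨hCS hy, hCV hy⟩)
      · rcases hy with hy | hy
        · exact closure_mono subset_union_left (hclA (Or.inr hy))
        · exact closure_mono subset_union_right (hCcl ⟨hGS hy, hGV hy⟩)
    · rintro y (hy | hy)
      · rcases hy with hy | hy
        · exact closure_mono subset_union_left (hclB (Or.inl hy))
        · exact closure_mono subset_union_right (hGcl ⟨hCS hy, hCV hy⟩)
      · rcases hy with hy | hy
        · exact closure_mono subset_union_left (hclB (Or.inr hy))
        · exact closure_mono subset_union_right (hGcl ⟨hGS hy, hGV hy⟩)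
  have hle : (A, B) ≤ (A ∪ C, B ∪ G) := ⟨subset_union_left, subset_union_left⟩
  have := hmax hmem' hle
  obtain ⟨c, hc⟩ := hCne
  have hcA : c ∈ A := this.1 (Or.inr hc)
  have : c ∈ closure (A ∪ B) := subset_closure (Or.inl hcA)
  exact hc.2 this

theorem stmt14 [T : TopologicalSpace X] (m : ℕ) (hm : 1 < m)
    (hirr : ∀ A : Set X, A.Nonempty → ¬ ResolvableFam T A (Fin (m + 1)))
    (D : Fin m → Set X) (hdisj : Pairwise fun i j => Disjoint (D i) (D j))
    (hdense : ∀ i, Dense (D i)) (hcover : (⋃ i, D i) = univ)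
    (R : Fin m → Set X)
    (hR : ∀ i, R i = ⋃₀ {S : Set X | S ⊆ D i ∧ ResolvableFam T S (Fin 2)}) :
    ∀ i, ∀ U : Set X, IsOpen U → (U ∩ D i).Nonempty →
      ¬ (U ∩ D i ⊆ closure (R i)) := by
  intro i U hUopen hne hsub
  classical
  obtain ⟨A, B, hAD, hBD, hAB, hclA, hclB, habs⟩ := exists_maximal_pair T (D i)
  have hUne : U.Nonempty := hne.mono inter_subset_left
  -- R i ⊆ closure A and closure B
  have hRA : R i ⊆ closure A := by
    rw [hR]
    apply sUnion_subset
    rintro S ⟨hSD, hSres⟩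
    exact (habs S hSD hSres).trans (closure_minimal hclA isClosed_closure)
  have hRB : R i ⊆ closure B := by
    rw [hR]
    apply sUnion_subset
    rintro S ⟨hSD, hSres⟩
    exact (habs S hSD hSres).trans (closure_minimal hclB isClosed_closure)
  -- U ⊆ closure (U ∩ D j) for every j
  have hUDj : ∀ j : Fin m, U ⊆ closure (U ∩ D j) := by
    intro j
    intro x hx
    have : x ∈ U ∩ closure (D j) := ⟨hx, (hdense j).closure_eq ▸ mem_univ x⟩
    exact hUopen.inter_closure this
  -- U ⊆ closure (U ∩ A), U ⊆ closure (U ∩ B)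
  have hRA' : closure (R i) ⊆ closure A := by
    simpa using closure_mono hRA
  have hRB' : closure (R i) ⊆ closure B := by
    simpa using closure_mono hRB
  have hUA : U ⊆ closure (U ∩ A) := by
    have h1 : U ∩ D i ⊆ U ∩ closure A := fun x hx => ⟨hx.1, hRA' (hsub hx)⟩
    have h2 : U ∩ D i ⊆ closure (U ∩ A) := h1.trans hUopen.inter_closure
    calc U ⊆ closure (U ∩ D i) := hUDj i
      _ ⊆ closure (closure (U ∩ A)) := closure_mono h2
      _ = closure (U ∩ A) := closure_closure
  have hUB : U ⊆ closure (U ∩ B) := by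
    have h1 : U ∩ D i ⊆ U ∩ closure B := fun x hx => ⟨hx.1, hRB' (hsub hx)⟩
    have h2 : U ∩ D i ⊆ closure (U ∩ B) := h1.trans hUopen.inter_closure
    calc U ⊆ closure (U ∩ D i) := hUDj i
      _ ⊆ closure (closure (U ∩ B)) := closure_mono h2
      _ = closure (U ∩ B) := closure_closure
  have hneA : (U ∩ A).Nonempty := by
    obtain ⟨x, hx⟩ := hUne
    rcases eq_empty_or_nonempty (U ∩ A) with h | h
    · have := hUA hx; rw [h, closure_empty] at this; exact absurd this (notMem_empty x)
    · exact h
  have hneB : (U ∩ B).Nonempty := by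
    obtain ⟨x, hx⟩ := hUne
    rcases eq_empty_or_nonempty (U ∩ B) with h | h
    · have := hUB hx; rw [h, closure_empty] at this; exact absurd this (notMem_empty x)
    · exact h
  have hneDj : ∀ j : Fin m, (U ∩ D j).Nonempty := by
    intro j
    obtain ⟨x, hx⟩ := hUne
    rcases eq_empty_or_nonempty (U ∩ D j) with h | h
    · have := hUDj j hx; rw [h, closure_empty] at this; exact absurd this (notMem_empty x)
    · exact h
  -- build the (m+1)-family on U
  set F : Fin (m + 1) → Set X :=
    Fin.lastCases (U ∩ B) (fun j => if j = i then U ∩ A else U ∩ D j) with hF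
  apply hirr U hUne
  refine ⟨F, ?_, ?_, ?_, ?_⟩
  · intro j
    induction j using Fin.lastCases with
    | last => simp [hF]
    | cast j =>
      simp only [hF, Fin.lastCases_castSucc]
      split <;> exact inter_subset_left
  · intro j
    induction j using Fin.lastCases with
    | last => simpa [hF] using hneB
    | cast j =>
      simp only [hF, Fin.lastCases_castSucc]
      split
      · exact hneA
      · exact hneDj j
  · intro j
    induction j using Fin.lastCases with
    | last => simpa [hF] using hUB
    | cast j =>
      simp only [hF, Fin.lastCases_castSucc]
      split
      · exact hUA
      · exact hUDj j
  · -- pairwise disjoint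
    have hAi : A ⊆ D i := hAD
    have hBi : B ⊆ D i := hBD
    have main : ∀ j k : Fin (m + 1), j ≠ k → Disjoint (F j) (F k) := by
      intro j k hjk
      induction j using Fin.lastCases with
      | last =>
        induction k using Fin.lastCases with
        | last => exact absurd rfl hjk
        | cast k =>
          simp only [hF, Fin.lastCases_last, Fin.lastCases_castSucc]
          by_cases hk : k = i
          · simp only [if_pos hk]
            exact hAB.symm.mono inter_subset_right inter_subset_right
          · simp only [if_neg hk]
            exact (hdisj (Ne.symm hk)).mono (inter_subset_right.trans hBi) inter_subset_right
      | cast j =>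
        induction k using Fin.lastCases with
        | last =>
          simp only [hF, Fin.lastCases_last, Fin.lastCases_castSucc]
          by_cases hj : j = i
          · simp only [if_pos hj]
            exact hAB.mono inter_subset_right inter_subset_right
          · simp only [if_neg hj]
            exact (hdisj hj).mono inter_subset_right (inter_subset_right.trans hBi)
        | cast k =>
          have hjk' : j ≠ k := fun h => hjk (by rw [h])
          simp only [hF, Fin.lastCases_castSucc]
          by_cases hj : j = i <;> by_cases hk : k = i
          · exact absurd (hj.trans hk.symm) hjk'
          · simp only [if_pos hj, if_neg hk]
            exact (hdisj (Ne.symm hk)).mono (inter_subset_right.trans hAi) inter_subset_right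
          · simp only [if_neg hj, if_pos hk]
            exact (hdisj hj).mono inter_subset_right (inter_subset_right.trans hAi)
          · simp only [if_neg hj, if_neg hk]
            exact (hdisj hjk').mono inter_subset_right inter_subset_right
    exact fun j k hjk => main j k hjk
end

section
/- Let (X, U) be hereditarily (n+1)-irresolvable and suppose X = E_0 ∪ ... ∪ E_{m-1} for sets E_i. Then there exist a nonempty open set U'' and a set F ⊆ {0,...,m-1} with |F| ≤ n such that U'' ⊆ ⋃_{i∈F} E_i. -/
/-! If some nonempty open set `U` is covered by `k > n` of the sets `E i`, choose the cover
with `k` minimal. Minimality means that no nonempty open subset of `U` is covered by `k - 1`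
of them, so the `k` sets `U \ ⋃_{j ≠ i} E j` are pairwise disjoint and each is dense in `U`:
`U` would be `(n+1)`-resolvable. -/

open Set TopologicalSpace

variable {X : Type*}

theorem ResolvableFam.comp_embedding {T : TopologicalSpace X} {S : Set X} {ι κ : Type*}
    (h : ResolvableFam T S ι) (f : κ ↪ ι) : ResolvableFam T S κ := by
  obtain ⟨D, hsub, hne, hdense, hdisj⟩ := h
  exact ⟨D ∘ f, fun k => hsub (f k), fun k => hne (f k), fun k => hdense (f k),
    fun k l hkl => hdisj (f.injective.ne hkl)⟩

section Cover

variable [t : TopologicalSpace X] {ι : Type*}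

theorem resolvableFam_of_not_subset_iUnion_ne {U : Set X} (hU : IsOpen U) (hne : U.Nonempty)
    {E : ι → Set X} (hcover : U ⊆ ⋃ i, E i)
    (hmin : ∀ i V, IsOpen V → V.Nonempty → V ⊆ U → ¬ V ⊆ ⋃ (j) (_ : j ≠ i), E j) :
    ResolvableFam t U ι := by
  have meets (i : ι) {W : Set X} (hW : IsOpen W) (hUW : (U ∩ W).Nonempty) :
      (W ∩ (U \ ⋃ (j) (_ : j ≠ i), E j)).Nonempty := by
    obtain ⟨y, hyUW, hy⟩ := not_subset.1 (hmin i _ (hU.inter hW) hUW inter_subset_left)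
    exact ⟨y, hyUW.2, hyUW.1, hy⟩
  refine ⟨fun i => U \ ⋃ (j) (_ : j ≠ i), E j, fun i => sdiff_subset,
    fun i => (meets i isOpen_univ (by simpa using hne)).mono inter_subset_right,
    fun i x hx => mem_closure_iff.2 fun W hW hxW => meets i hW ⟨x, hx, hxW⟩, ?_⟩
  intro i j hij
  refine disjoint_left.2 fun x ⟨hxU, hxi⟩ ⟨_, hxj⟩ => ?_
  obtain ⟨l, hxl⟩ := mem_iUnion.1 (hcover hxU)
  rcases eq_or_ne l i with rfl | hli
  · exact hxj (mem_biUnion hij hxl)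
  · exact hxi (mem_biUnion hli hxl)

theorem exists_isOpen_subset_biUnion_card_minimal [Nonempty X] [Fintype ι] {E : ι → Set X}
    (hcover : ⋃ i, E i = univ) :
    ∃ U : Set X, IsOpen U ∧ U.Nonempty ∧ ∃ F : Finset ι, U ⊆ ⋃ i ∈ F, E i ∧
      ∀ V : Set X, IsOpen V → V.Nonempty → ∀ G : Finset ι, V ⊆ ⋃ i ∈ G, E i →
        F.card ≤ G.card := by
  classical
  have hex : ∃ k, ∃ U : Set X, IsOpen U ∧ U.Nonempty ∧
      ∃ F : Finset ι, U ⊆ ⋃ i ∈ F, E i ∧ F.card = k :=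
    ⟨_, univ, isOpen_univ, univ_nonempty, Finset.univ, by simp [← hcover], rfl⟩
  obtain ⟨U, hU, hne, F, hUF, hF⟩ := Nat.find_spec hex
  exact ⟨U, hU, hne, F, hUF, fun V hV hVne G hVG =>
    hF ▸ Nat.find_min' hex ⟨V, hV, hVne, G, hVG, rfl⟩⟩

end Cover

theorem stmt15_general [T : TopologicalSpace X] [Nonempty X] (n m : ℕ)
    (hirr : ∀ A : Set X, A.Nonempty → ¬ ResolvableFam T A (Fin (n + 1)))
    (E : Fin m → Set X) (hcover : (⋃ i, E i) = univ) :
    ∃ U : Set X, IsOpen U ∧ U.Nonempty ∧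
      ∃ F : Finset (Fin m), F.card ≤ n ∧ U ⊆ ⋃ i ∈ F, E i := by
  classical
  obtain ⟨U, hU, hne, F, hUF, hmin⟩ := exists_isOpen_subset_biUnion_card_minimal hcover
  refine ⟨U, hU, hne, F, not_lt.1 fun hnF => hirr U hne ?_, hUF⟩
  have hcoverF : U ⊆ ⋃ i : F, E i :=
    hUF.trans (iUnion₂_subset fun i hi => subset_iUnion (fun j : F => E j) ⟨i, hi⟩)
  have hminF (i : F) (V : Set X) (hV : IsOpen V) (hVne : V.Nonempty) :
      ¬ V ⊆ ⋃ (j : F) (_ : j ≠ i), E j := fun hVi => by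
    have hVerase : V ⊆ ⋃ j ∈ F.erase i, E j :=
      hVi.trans (iUnion₂_subset fun j hji =>
        subset_biUnion_of_mem (Finset.mem_erase.2 ⟨Subtype.coe_ne_coe.2 hji, j.2⟩))
    have hcard := hmin V hV hVne _ hVerase
    rw [Finset.card_erase_of_mem i.2] at hcard
    omega
  have hres : ResolvableFam T U F :=
    resolvableFam_of_not_subset_iUnion_ne hU hne hcoverF fun i V hV hVne _ => hminF i V hV hVne
  exact hres.comp_embedding
    (Function.Embedding.nonempty_of_card_le (by simpa using hnF)).some

theorem stmt15 [T : TopologicalSpace X] [Nonempty X] (n m : ℕ)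
    (h1 : 1 ≤ n) (h2 : n < m)
    (hirr : ∀ A : Set X, A.Nonempty → ¬ ResolvableFam T A (Fin (n + 1)))
    (E : Fin m → Set X) (hcover : (⋃ i, E i) = univ) :
    ∃ U : Set X, IsOpen U ∧ U.Nonempty ∧
      ∃ F : Finset (Fin m), F.card ≤ n ∧ U ⊆ ⋃ i ∈ F, E i :=
  stmt15_general (T := T) n m hirr E hcover
end

section
/- Quasi-regularity is chain-closed: if {T_i} is a chain (under inclusion) of quasi-regular topologies on a set X, then the topology generated by their union (which equals the union, as a chain of topologies) is quasi-regular. -/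
/-!
Since the topologies form a chain, a finite intersection of sets each open in some member of
the chain is open in the finest of those members. Hence these sets, together with `univ`, form
a base of the generated topology, so every nonempty open set `U` contains a nonempty set `B`
open in some member `t`. Quasi-regularity of `t` yields a nonempty `t`-open `V` whose
`t`-closure lies in `B`; as the generated topology is coarser than `t`, `V` is open in it and
its closure there is even smaller.
-/

open Set TopologicalSpace

variable {X : Type*}

open scoped Topology

theorem QuasiRegular.of_isTopologicalBasis {T : TopologicalSpace X} {B : Set (Set X)}
    (hB : @IsTopologicalBasis X T B)
    (h : ∀ b ∈ B, b.Nonempty → ∃ V : Set X, IsOpen[T] V ∧ V.Nonempty ∧ closure[T] V ⊆ b) :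
    QuasiRegular T := by
  rintro U hU ⟨x, hx⟩
  obtain ⟨b, hb, hxb, hbU⟩ := hB.exists_subset_of_mem_open hx hU
  obtain ⟨V, hV, hVne, hVb⟩ := h b hb ⟨x, hxb⟩
  exact ⟨V, hV, hVne, hVb.trans hbU⟩

theorem QuasiRegular.exists_isOpen_closure_subset_of_le {t T : TopologicalSpace X}
    (ht : QuasiRegular t) (hle : T ≤ t) {b : Set X} (hb : IsOpen[t] b) (hne : b.Nonempty) :
    ∃ V : Set X, IsOpen[T] V ∧ V.Nonempty ∧ closure[T] V ⊆ b := by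
  obtain ⟨V, hV, hVne, hVb⟩ := ht b hb hne
  exact ⟨V, hle V hV, hVne, (closure.mono hle).trans hVb⟩

theorem DirectedOn.inter_mem_biUnion_setOf_isOpen {C : Set (TopologicalSpace X)}
    (hC : DirectedOn (· ≥ ·) C) {s u : Set X}
    (hs : s ∈ ⋃ t ∈ C, {s : Set X | IsOpen[t] s}) (hu : u ∈ ⋃ t ∈ C, {s : Set X | IsOpen[t] s}) :
    s ∩ u ∈ ⋃ t ∈ C, {s : Set X | IsOpen[t] s} := by
  simp only [mem_iUnion₂, mem_ofPred_eq] at hs hu ⊢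
  obtain ⟨t₁, ht₁, hs⟩ := hs
  obtain ⟨t₂, ht₂, hu⟩ := hu
  obtain ⟨t, ht, h₁, h₂⟩ := hC t₁ ht₁ t₂ ht₂
  exact ⟨t, ht, (h₁ s hs).inter (h₂ u hu)⟩

theorem stmt19 (C : Set (TopologicalSpace X))
    (hchain : ∀ t₁ ∈ C, ∀ t₂ ∈ C,
      (∀ s : Set X, t₁.IsOpen s → t₂.IsOpen s) ∨ (∀ s : Set X, t₂.IsOpen s → t₁.IsOpen s))
    (hqr : ∀ t ∈ C, QuasiRegular t) :
    QuasiRegular (TopologicalSpace.generateFrom (⋃ t ∈ C, {s : Set X | t.IsOpen s})) := by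
  have hdir : DirectedOn (· ≥ ·) C := by
    refine IsChain.directedOn fun t₁ ht₁ t₂ ht₂ _ => ?_
    exact (hchain t₁ ht₁ t₂ ht₂).imp isOpen_implies_isOpen_iff.mp isOpen_implies_isOpen_iff.mp
  refine .of_isTopologicalBasis
    (isTopologicalBasis_of_subbasis_of_inter (t := generateFrom _) rfl fun s hs u hu =>
      hdir.inter_mem_biUnion_setOf_isOpen hs hu) ?_
  rintro b (rfl | hb) hne
  · exact ⟨univ, (generateFrom _).isOpen_univ, hne, subset_univ _⟩
  · obtain ⟨t, ht, hbt⟩ := mem_iUnion₂.1 hb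
    have hle : generateFrom (⋃ t ∈ C, {s : Set X | IsOpen[t] s}) ≤ t :=
      fun s hs => isOpen_generateFrom_of_mem (mem_iUnion₂.2 ⟨t, ht, hs⟩)
    exact (hqr t ht).exists_isOpen_closure_subset_of_le hle hbt hne
end
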